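/- arXiv:1509.01669 — 6 statements merged into one kernel-verified Lean document; each statement's English description precedes it below -/
import Mathlib

section
/- For every real number p with 1/2 < p < 1, there exists a monotone factor from the Bernoulli shift B(1-p, p) to the Bernoulli shift B(p, 1-p): a measurable map φ : {0,1}^ℤ → {0,1}^ℤ such that the pushforward of μ under φ equals ν, φ ∘ T = T ∘ φ holds μ-almost everywhere, and φ(x)_i ≤ x_i for all i ∈ ℤ and all x ∈ {0,1}^ℤ. (This is the equal-entropy, two-symbol case of the monotone factor problem.) -/
/-!
Read a `true` coordinate as a service opportunity (probability `p`) and a `false` one as an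
arrival (probability `1 - p`) of a discrete-time single-server queue, and let `φ x i = true`
exactly when a customer departs at time `i`, i.e. when `x i = true` and the queue was nonempty.
Then `φ x ≤ x` and `φ` commutes with the shift. Since `p > 1/2`, arrivals minus services form a
random walk with negative drift, so by the strong law of large numbers the stationary queue length
`Q n = ⨆ m, (arrivals - services in (n - m, n])` is almost surely finite. Stationarity and
Lindley's recursion give the detailed balance relation `p P(Q = k + 1) = (1 - p) P(Q = k)`, and
with it Burke's theorem follows by induction on time: the departures up to time `n` are i.i.d.
with success probability `1 - p` and independent of `Q n`. The sets `{y | ∀ i ∈ s, y i = true}`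
form a generating π-system, so this identifies the law of `φ` with `ν`.
-/

open MeasureTheory

/-- The left shift `T` on `{0,1}^ℤ`, `(Tx)_i = x_{i+1}`. -/
def shift (x : ℤ → Bool) : ℤ → Bool := fun i => x (i + 1)

/-- `μ` is the law of the Bernoulli shift whose coordinates are i.i.d. taking the value
`1` (`true`) with probability `p` and `0` (`false`) with probability `1 - p`. -/
def IsBernoulliShift (p : ℝ) (μ : Measure (ℤ → Bool)) : Prop :=
  IsProbabilityMeasure μ ∧
    ∀ (s : Finset ℤ) (f : ℤ → Bool),
      μ {x | ∀ i ∈ s, x i = f i} =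
        ENNReal.ofReal (∏ i ∈ s, if f i then p else 1 - p)

open ProbabilityTheory Set Filter Topology
open scoped translate

def allTrueOn (s : Finset ℤ) : Set (ℤ → Bool) := {x | ∀ i ∈ s, x i = true}

@[simp]
lemma allTrueOn_empty : allTrueOn ∅ = univ := by simp [allTrueOn]

lemma allTrueOn_union (s t : Finset ℤ) : allTrueOn (s ∪ t) = allTrueOn s ∩ allTrueOn t := by
  ext x; simp [allTrueOn, or_imp, forall_and]

lemma allTrueOn_insert (i : ℤ) (s : Finset ℤ) :
    allTrueOn (insert i s) = allTrueOn s ∩ {x | x i = true} := by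
  ext x; simp [allTrueOn, and_comm]

lemma measurableSet_allTrueOn (s : Finset ℤ) : MeasurableSet (allTrueOn s) := by
  simp only [allTrueOn, ofPred_forall]
  exact .iInter fun i => .iInter fun _ =>
    measurableSet_eq_fun (measurable_pi_apply i) measurable_const

lemma isPiSystem_range_allTrueOn : IsPiSystem (range allTrueOn) := by
  rintro _ ⟨s, rfl⟩ _ ⟨t, rfl⟩ -
  exact ⟨s ∪ t, allTrueOn_union s t⟩

lemma comap_eval_eq_generateFrom_allTrueOn (i : ℤ) :
    MeasurableSpace.comap (fun x : ℤ → Bool => x i) inferInstance =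
      MeasurableSpace.generateFrom {allTrueOn {i}} := by
  refine le_antisymm (measurable_to_bool ?_).comap_le (MeasurableSpace.generateFrom_le ?_)
  · exact MeasurableSpace.measurableSet_generateFrom (by ext; simp [allTrueOn])
  · rintro _ rfl
    exact ⟨{true}, trivial, by ext; simp [allTrueOn]⟩

lemma generateFrom_range_allTrueOn :
    MeasurableSpace.generateFrom (range allTrueOn) = MeasurableSpace.pi := by
  refine le_antisymm (MeasurableSpace.generateFrom_le ?_) (iSup_le fun i => ?_)
  · rintro _ ⟨s, rfl⟩
    exact measurableSet_allTrueOn s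
  · rw [comap_eval_eq_generateFrom_allTrueOn]
    exact MeasurableSpace.generateFrom_mono (singleton_subset_iff.2 ⟨{i}, rfl⟩)

lemma ext_of_allTrueOn {μ ν : Measure (ℤ → Bool)} [IsFiniteMeasure μ]
    (h : ∀ s, μ (allTrueOn s) = ν (allTrueOn s)) : μ = ν :=
  ext_of_generate_finite _ generateFrom_range_allTrueOn.symm isPiSystem_range_allTrueOn
    (by rintro _ ⟨s, rfl⟩; exact h s) (by simpa using h ∅)

lemma measurable_translate (a : ℤ) : Measurable (τ a : (ℤ → Bool) → ℤ → Bool) :=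
  measurable_pi_lambda _ fun _ => measurable_pi_apply _

lemma translate_preimage_allTrueOn (a : ℤ) (s : Finset ℤ) :
    τ a ⁻¹' allTrueOn s = allTrueOn (s.map (Equiv.subRight a).toEmbedding) := by
  ext x
  simp only [allTrueOn, mem_preimage, translate_apply, Finset.mem_map_equiv, mem_ofPred_eq]
  exact ⟨fun h j hj => by simpa using h _ hj, fun h i hi => h _ (by simpa using hi)⟩

/- `walk x n m` counts arrivals minus services during the times `(n - m, n]`, so the queue length
at time `n` is `⨆ m, walk x n m`; as it may be infinite, it is handled through the events
`QueueAtLeast x n q` and `queueLengthEq n q`. -/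
def increment (b : Bool) : ℤ := if b then -1 else 1

def walk (x : ℤ → Bool) (n : ℤ) (m : ℕ) : ℤ := ∑ j ∈ Finset.range m, increment (x (n - j))

def QueueAtLeast (x : ℤ → Bool) (n q : ℤ) : Prop := ∃ m, q ≤ walk x n m

def queueLengthEq (n : ℤ) (q : ℕ) : Set (ℤ → Bool) :=
  {x | QueueAtLeast x n q ∧ ¬QueueAtLeast x n (q + 1)}

open Classical in
noncomputable def departures (x : ℤ → Bool) (i : ℤ) : Bool :=
  if QueueAtLeast x (i - 1) 1 then x i else false

section Queue

variable {x : ℤ → Bool} {n q : ℤ}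

@[simp]
lemma walk_zero (x : ℤ → Bool) (n : ℤ) : walk x n 0 = 0 := by simp [walk]

lemma walk_succ (x : ℤ → Bool) (n : ℤ) (m : ℕ) :
    walk x (n + 1) (m + 1) = increment (x (n + 1)) + walk x n m := by
  simp only [walk, Finset.sum_range_succ', Nat.cast_add, Nat.cast_one, Nat.cast_zero, sub_zero]
  rw [add_comm]
  congr 1
  exact Finset.sum_congr rfl fun j _ => by congr 2; ring

lemma walk_le (x : ℤ → Bool) (n : ℤ) (m : ℕ) : walk x n m ≤ m := by
  calc walk x n m ≤ ∑ _j ∈ Finset.range m, (1 : ℤ) :=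
        Finset.sum_le_sum fun j _ => by unfold increment; split <;> omega
    _ = m := by simp

lemma walk_translate (a : ℤ) (x : ℤ → Bool) (n : ℤ) (m : ℕ) :
    walk (τ a x) n m = walk x (n - a) m := by
  simp only [walk, translate_apply, sub_right_comm]

lemma queueAtLeast_of_nonpos (hq : q ≤ 0) : QueueAtLeast x n q := ⟨0, by simpa using hq⟩

@[simp]
lemma queueAtLeast_zero : QueueAtLeast x n 0 := queueAtLeast_of_nonpos le_rfl

lemma QueueAtLeast.mono {q' : ℤ} (h : QueueAtLeast x n q) (hq : q' ≤ q) : QueueAtLeast x n q' :=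
  h.imp fun _ hm => hq.trans hm

/-- Lindley's recursion. -/
lemma queueAtLeast_succ_iff :
    QueueAtLeast x (n + 1) q ↔ q ≤ 0 ∨ QueueAtLeast x n (q - increment (x (n + 1))) := by
  constructor
  · rintro ⟨_ | m, hm⟩
    · simp_all
    · exact or_iff_not_imp_left.2 fun _ => ⟨m, by rw [walk_succ] at hm; omega⟩
  · rintro (hq | ⟨m, hm⟩)
    · exact queueAtLeast_of_nonpos hq
    · exact ⟨m + 1, by rw [walk_succ]; omega⟩

lemma queueAtLeast_translate (a : ℤ) : QueueAtLeast (τ a x) n q ↔ QueueAtLeast x (n - a) q := by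
  simp only [QueueAtLeast, walk_translate]

end Queue

lemma translate_preimage_queueLengthEq (a n : ℤ) (q : ℕ) :
    τ a ⁻¹' queueLengthEq n q = queueLengthEq (n - a) q := by
  ext x; simp [queueLengthEq, queueAtLeast_translate]

lemma departures_translate (a : ℤ) (x : ℤ → Bool) : departures (τ a x) = τ a (departures x) := by
  ext i
  rw [translate_apply, departures, departures, queueAtLeast_translate, sub_right_comm]
  rfl

lemma departures_le (x : ℤ → Bool) (i : ℤ) : departures x i ≤ x i := by
  unfold departures; split <;> simp

lemma departures_inter_queueLengthEq (n : ℤ) (k : ℕ) :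
    {x | departures x (n + 1) = true} ∩ queueLengthEq (n + 1) k =
      queueLengthEq n (k + 1) ∩ {x | x (n + 1) = true} := by
  ext x
  cases h : x (n + 1)
  · simp [queueLengthEq, departures, h]
  simp only [departures, add_sub_cancel_right, Bool.if_false_right, Bool.and_eq_true,
    decide_eq_true_eq, queueLengthEq, queueAtLeast_succ_iff, Int.natCast_nonpos_iff, increment,
    Int.reduceNeg, Order.add_one_le_iff, not_or, not_lt, Nat.cast_nonneg, true_and, mem_inter_iff,
    mem_ofPred_eq, h, and_true, ↓reduceIte, sub_neg_eq_add, Nat.cast_add, Nat.cast_one]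
  refine ⟨fun ⟨h1, hk, h2⟩ => ⟨?_, h2⟩, fun ⟨h1, h2⟩ => ⟨h1.mono (by omega), .inr h1, h2⟩⟩
  rcases hk with rfl | hk
  · simpa using h1
  · exact hk

lemma queueLengthEq_succ_zero (n : ℤ) :
    queueLengthEq (n + 1) 0 =
      (queueLengthEq n 0 ∪ queueLengthEq n 1) ∩ {x | x (n + 1) = true} := by
  ext x
  cases h : x (n + 1)
  · simp [queueLengthEq, queueAtLeast_succ_iff, h, increment]
  simp only [queueLengthEq, CharP.cast_eq_zero, queueAtLeast_zero, zero_add, queueAtLeast_succ_iff,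
    Int.reduceLE, increment, Int.reduceNeg, false_or, true_and, mem_ofPred_eq, h, ↓reduceIte,
    sub_neg_eq_add, Int.reduceAdd, Nat.cast_one, mem_inter_iff, mem_union, and_true]
  have : QueueAtLeast x n 2 → QueueAtLeast x n 1 := (·.mono (by norm_num))
  tauto

lemma queueLengthEq_succ_succ (n : ℤ) (k : ℕ) :
    queueLengthEq (n + 1) (k + 1) =
      queueLengthEq n (k + 2) ∩ {x | x (n + 1) = true} ∪
        queueLengthEq n k ∩ {x | x (n + 1) = false} := by
  ext x
  simp only [queueLengthEq, mem_inter_iff, mem_union, mem_ofPred_eq]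
  cases h : x (n + 1) <;> simp [queueAtLeast_succ_iff, h, increment, add_assoc,
    (Int.natCast_nonneg k).not_gt, show (k : ℤ) + 2 - 1 = k + 1 by ring,
    show (0 : ℤ) < k + 2 by positivity]

lemma departures_eq_true {x : ℤ → Bool} {i : ℤ} :
    departures x i = true ↔ QueueAtLeast x (i - 1) 1 ∧ x i = true := by
  simp [departures]

lemma disjoint_queueLengthEq (n : ℤ) {j k : ℕ} (h : j ≠ k) :
    Disjoint (queueLengthEq n j) (queueLengthEq n k) := by
  wlog hjk : j < k generalizing j k
  · exact (this h.symm (by omega)).symm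
  refine disjoint_left.2 fun x hj hk => hj.2 (hk.1.mono ?_)
  omega

lemma exists_mem_queueLengthEq {x : ℤ → Bool} {n : ℤ} (h : ∃ q : ℕ, ¬QueueAtLeast x n q) :
    ∃ k : ℕ, x ∈ queueLengthEq n k := by
  classical
  have hpos : Nat.find h ≠ 0 := fun h0 => by simpa [h0] using Nat.find_spec h
  refine ⟨Nat.find h - 1, ?_, ?_⟩
  · simpa using Nat.find_min h (Nat.sub_one_lt hpos)
  · simpa [Nat.cast_sub (Nat.one_le_iff_ne_zero.2 hpos)] using Nat.find_spec h

noncomputable def past : Filtration ℤ (MeasurableSpace.pi : MeasurableSpace (ℤ → Bool)) :=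
  Filtration.natural (fun i (x : ℤ → Bool) => x i) fun i =>
    (measurable_pi_apply i).stronglyMeasurable

section Past

variable {n j : ℤ}

lemma measurable_eval_past (hj : j ≤ n) : Measurable[past n] fun x : ℤ → Bool => x j :=
  ((Filtration.stronglyAdapted_natural _ j).measurable).mono (past.mono hj) le_rfl

lemma measurable_walk_past (hj : j ≤ n) (m : ℕ) : Measurable[past n] fun x => walk x j m :=
  Finset.measurable_sum _ fun i _ =>
    (measurable_of_countable increment).comp (measurable_eval_past (by omega))

lemma measurableSet_queueAtLeast_past (hj : j ≤ n) (q : ℤ) :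
    MeasurableSet[past n] {x | QueueAtLeast x j q} := by
  simp only [QueueAtLeast, ofPred_exists]
  exact .iUnion fun m => measurableSet_le measurable_const (measurable_walk_past hj m)

lemma measurableSet_queueLengthEq_past (hj : j ≤ n) (q : ℕ) :
    MeasurableSet[past n] (queueLengthEq j q) :=
  (measurableSet_queueAtLeast_past hj _).inter (measurableSet_queueAtLeast_past hj _).compl

lemma measurableSet_departures_past (hj : j ≤ n) :
    MeasurableSet[past n] {x | departures x j = true} := by
  simp only [departures_eq_true, ofPred_and]
  exact (measurableSet_queueAtLeast_past (by omega) 1).inter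
    (measurableSet_eq_fun (measurable_eval_past hj) measurable_const)

end Past

lemma measurable_departures : Measurable departures :=
  measurable_pi_lambda _ fun i =>
    measurable_to_bool (past.le i _ (measurableSet_departures_past le_rfl))

lemma measurableSet_departures_preimage_allTrueOn_past {n : ℤ} {s : Finset ℤ}
    (hs : ∀ i ∈ s, i ≤ n) : MeasurableSet[past n] (departures ⁻¹' allTrueOn s) := by
  have : departures ⁻¹' allTrueOn s = ⋂ i ∈ s, {x | departures x i = true} := by
    ext; simp [allTrueOn]
  rw [this]
  exact .biInter s.countable_toSet fun i hi => measurableSet_departures_past (hs i hi)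

namespace IsBernoulliShift

variable {p : ℝ} {μ : Measure (ℤ → Bool)}

lemma measure_allTrueOn (hμ : IsBernoulliShift p μ) (s : Finset ℤ) :
    μ (allTrueOn s) = ENNReal.ofReal (p ^ s.card) := by
  simpa [allTrueOn] using hμ.2 s fun _ => true

lemma measurePreserving_translate (hμ : IsBernoulliShift p μ) (a : ℤ) :
    MeasurePreserving (τ a) μ μ := by
  have := hμ.1
  refine ⟨measurable_translate a, ext_of_allTrueOn fun s => ?_⟩
  rw [Measure.map_apply (measurable_translate a) (measurableSet_allTrueOn s),
    translate_preimage_allTrueOn, hμ.measure_allTrueOn, hμ.measure_allTrueOn, Finset.card_map]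

lemma iIndepFun_eval (hμ : IsBernoulliShift p μ) (hp : 0 ≤ p) :
    iIndepFun (fun i (x : ℤ → Bool) => x i) μ := by
  have := hμ.1
  rw [iIndepFun_iff_iIndep]
  refine iIndepSets.iIndep (fun i => (measurable_pi_apply i).comap_le) (fun i => {allTrueOn {i}})
    (fun _ => IsPiSystem.singleton _) comap_eval_eq_generateFrom_allTrueOn ?_
  refine (iIndepSets_iff _ _).2 fun s f hf => ?_
  replace hf : ∀ i ∈ s, f i = allTrueOn {i} := hf
  have hinter : (⋂ i ∈ s, f i) = allTrueOn s := by
    ext x; simp +contextual [allTrueOn, hf]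
  rw [hinter, Finset.prod_congr rfl fun i hi => congrArg μ (hf i hi)]
  simp [hμ.measure_allTrueOn, ENNReal.ofReal_pow hp]

lemma measureReal_eval_eq (hμ : IsBernoulliShift p μ) (hp0 : 0 ≤ p) (hp1 : p ≤ 1) (i : ℤ)
    (b : Bool) : μ.real {x | x i = b} = if b then p else 1 - p := by
  have := hμ.2 {i} fun _ => b
  simp only [Finset.mem_singleton, forall_eq, Finset.prod_singleton] at this
  rw [measureReal_def, this, ENNReal.toReal_ofReal (by split <;> linarith)]

lemma measureReal_inter_eval_succ (hμ : IsBernoulliShift p μ) (hp0 : 0 ≤ p) (hp1 : p ≤ 1)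
    {n : ℤ} {E : Set (ℤ → Bool)} (hE : MeasurableSet[past n] E) (b : Bool) :
    μ.real (E ∩ {x | x (n + 1) = b}) = μ.real E * if b then p else 1 - p := by
  have hindep := indep_iSup_of_disjoint (fun i => (measurable_pi_apply i).comap_le)
    ((iIndepFun_iff_iIndep _ _ _).1 (hμ.iIndepFun_eval hp0))
    (show Disjoint (Iic n) {n + 1} by simp)
  have hF : MeasurableSet[⨆ i ∈ ({n + 1} : Set ℤ),
      MeasurableSpace.comap (fun x : ℤ → Bool => x i) inferInstance] {x | x (n + 1) = b} := by
    rw [iSup_singleton]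
    exact ⟨{b}, trivial, rfl⟩
  rw [← hμ.measureReal_eval_eq hp0 hp1 (n + 1) b]
  simp only [measureReal_def, (Indep_iff _ _ μ).1 hindep E _ hE hF, ENNReal.toReal_mul]

lemma measureReal_inter_queueLengthEq_succ_zero (hμ : IsBernoulliShift p μ) (hp0 : 0 ≤ p)
    (hp1 : p ≤ 1) {n : ℤ} {E : Set (ℤ → Bool)} (hE : MeasurableSet[past n] E) :
    μ.real (E ∩ queueLengthEq (n + 1) 0) =
      p * (μ.real (E ∩ queueLengthEq n 0) + μ.real (E ∩ queueLengthEq n 1)) := by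
  have := hμ.1
  have hpast (k : ℕ) : MeasurableSet[past n] (E ∩ queueLengthEq n k) :=
    hE.inter (measurableSet_queueLengthEq_past le_rfl k)
  rw [queueLengthEq_succ_zero, ← inter_assoc, hμ.measureReal_inter_eval_succ hp0 hp1
    (by rw [inter_union_distrib_left]; exact (hpast 0).union (hpast 1)), inter_union_distrib_left,
    measureReal_union ((disjoint_queueLengthEq n zero_ne_one).mono inter_subset_right
      inter_subset_right) (past.le n _ (hpast 1))]
  simp [mul_comm]

lemma measureReal_inter_queueLengthEq_succ_succ (hμ : IsBernoulliShift p μ) (hp0 : 0 ≤ p)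
    (hp1 : p ≤ 1) {n : ℤ} {E : Set (ℤ → Bool)} (hE : MeasurableSet[past n] E) (k : ℕ) :
    μ.real (E ∩ queueLengthEq (n + 1) (k + 1)) =
      p * μ.real (E ∩ queueLengthEq n (k + 2)) + (1 - p) * μ.real (E ∩ queueLengthEq n k) := by
  have := hμ.1
  have hpast (k : ℕ) : MeasurableSet[past n] (E ∩ queueLengthEq n k) :=
    hE.inter (measurableSet_queueLengthEq_past le_rfl k)
  have hdisj : Disjoint {x : ℤ → Bool | x (n + 1) = true} {x | x (n + 1) = false} := by
    simp [disjoint_left]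
  have hmeas : MeasurableSet (E ∩ queueLengthEq n k ∩ {x | x (n + 1) = false}) :=
    (past.le n _ (hpast k)).inter (measurableSet_eq_fun (measurable_pi_apply _) measurable_const)
  rw [queueLengthEq_succ_succ, inter_union_distrib_left, ← inter_assoc, ← inter_assoc,
    measureReal_union (hdisj.mono inter_subset_right inter_subset_right) hmeas,
    hμ.measureReal_inter_eval_succ hp0 hp1 (hpast _),
    hμ.measureReal_inter_eval_succ hp0 hp1 (hpast _)]
  simp [mul_comm]

lemma measureReal_inter_departures_inter_queueLengthEq (hμ : IsBernoulliShift p μ) (hp0 : 0 ≤ p)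
    (hp1 : p ≤ 1) {n : ℤ} {E : Set (ℤ → Bool)} (hE : MeasurableSet[past n] E) (k : ℕ) :
    μ.real (E ∩ {x | departures x (n + 1) = true} ∩ queueLengthEq (n + 1) k) =
      p * μ.real (E ∩ queueLengthEq n (k + 1)) := by
  rw [inter_assoc, departures_inter_queueLengthEq, ← inter_assoc,
    hμ.measureReal_inter_eval_succ hp0 hp1 (hE.inter (measurableSet_queueLengthEq_past le_rfl _))]
  simp [mul_comm]

lemma measureReal_queueLengthEq (hμ : IsBernoulliShift p μ) (n : ℤ) (k : ℕ) :
    μ.real (queueLengthEq n k) = μ.real (queueLengthEq 0 k) := by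
  rw [← (hμ.measurePreserving_translate (-n)).measureReal_preimage
    (past.le 0 _ (measurableSet_queueLengthEq_past le_rfl k)).nullMeasurableSet,
    translate_preimage_queueLengthEq, zero_sub, neg_neg]

lemma detailed_balance_queueLengthEq (hμ : IsBernoulliShift p μ) (hp0 : 0 ≤ p) (hp1 : p ≤ 1)
    (k : ℕ) :
    p * μ.real (queueLengthEq 0 (k + 1)) = (1 - p) * μ.real (queueLengthEq 0 k) := by
  have hstep0 := hμ.measureReal_inter_queueLengthEq_succ_zero hp0 hp1 (n := 0) MeasurableSet.univ
  have hstep := hμ.measureReal_inter_queueLengthEq_succ_succ hp0 hp1 (n := 0) MeasurableSet.univ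
  simp only [univ_inter, zero_add, hμ.measureReal_queueLengthEq 1] at hstep0 hstep
  induction k with
  | zero => simp only [zero_add] at hstep0 ⊢; linarith
  | succ k ih => linarith [hstep k]

lemma integral_increment_eval (hμ : IsBernoulliShift p μ) (hp0 : 0 ≤ p) (hp1 : p ≤ 1) (n : ℤ) :
    ∫ x, (increment (x n) : ℝ) ∂μ = 1 - 2 * p := by
  have := hμ.1
  have hmeas : Measurable fun x : ℤ → Bool => x n := measurable_pi_apply n
  rw [← integral_map (f := fun b => (increment b : ℝ)) hmeas.aemeasurable
      (measurable_of_countable _).aestronglyMeasurable,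
    integral_fintype (Integrable.of_finite), Fintype.sum_bool,
    map_measureReal_apply hmeas (measurableSet_singleton _),
    map_measureReal_apply hmeas (measurableSet_singleton _)]
  have htrue := hμ.measureReal_eval_eq hp0 hp1 n true
  have hfalse := hμ.measureReal_eval_eq hp0 hp1 n false
  simp only [preimage, mem_singleton_iff] at htrue hfalse ⊢
  simp only [htrue, ↓reduceIte, increment, Int.reduceNeg, Int.cast_neg, Int.cast_one, smul_eq_mul,
    mul_neg, mul_one, hfalse, Bool.false_eq_true]
  ring

lemma ae_tendsto_walk (hμ : IsBernoulliShift p μ) (hp0 : 0 ≤ p) (hp1 : p ≤ 1) (n : ℤ) :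
    ∀ᵐ x ∂μ, Tendsto (fun m : ℕ => (m : ℝ)⁻¹ * walk x n m) atTop (𝓝 (1 - 2 * p)) := by
  have := hμ.1
  set X : ℕ → (ℤ → Bool) → ℝ := fun j x => increment (x (n - j))
  have hX (j : ℕ) : Measurable (X j) :=
    (measurable_of_countable fun b => (increment b : ℝ)).comp (measurable_pi_apply (n - j))
  have hint : Integrable (X 0) μ :=
    .of_bound (hX 0).aestronglyMeasurable 1 (ae_of_all _ fun x => by
      simp only [X, increment]; split <;> simp)
  have hindep : Pairwise fun i j => IndepFun (X i) (X j) μ := fun i j hij =>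
    show IndepFun ((fun b => (increment b : ℝ)) ∘ _) ((fun b => (increment b : ℝ)) ∘ _) μ from
      ((hμ.iIndepFun_eval hp0).indepFun (i := n - i) (j := n - j) (by omega)).comp
        (measurable_of_countable _) (measurable_of_countable _)
  have hident (j : ℕ) : IdentDistrib (X j) (X 0) μ μ := by
    have hXj : X j = X 0 ∘ τ (j : ℤ) := by ext x; simp [X, sub_eq_add_neg]
    refine ⟨(hX j).aemeasurable, (hX 0).aemeasurable, ?_⟩
    rw [hXj, ← Measure.map_map (hX 0) (measurable_translate _),
      (hμ.measurePreserving_translate _).map_eq]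
  have hmean : μ[X 0] = 1 - 2 * p := by
    simpa [X] using hμ.integral_increment_eval hp0 hp1 n
  filter_upwards [strong_law_ae X hint hindep hident] with x hx
  rw [hmean] at hx
  simpa [walk, X] using hx

lemma ae_exists_not_queueAtLeast (hμ : IsBernoulliShift p μ) (hp : 1 / 2 < p) (hp1 : p ≤ 1)
    (n : ℤ) : ∀ᵐ x ∂μ, ∃ q : ℕ, ¬QueueAtLeast x n q := by
  filter_upwards [hμ.ae_tendsto_walk (by linarith) hp1 n] with x hx
  obtain ⟨N, hN⟩ := eventually_atTop.1 (hx.eventually (gt_mem_nhds (by linarith : 1 - 2 * p < 0)))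
  refine ⟨N + 1, fun ⟨m, hm⟩ => ?_⟩
  rcases lt_or_ge m N with hmN | hmN
  · have := walk_le x n m
    omega
  · have : walk x n m < 0 := by exact_mod_cast neg_of_mul_neg_right (hN m hmN) (by positivity)
    omega

lemma hasSum_measureReal_inter_queueLengthEq (hμ : IsBernoulliShift p μ) (hp : 1 / 2 < p)
    (hp1 : p ≤ 1) (n : ℤ) {E : Set (ℤ → Bool)} (hE : MeasurableSet E) :
    HasSum (fun k : ℕ => μ.real (E ∩ queueLengthEq n k)) (μ.real E) := by
  have := hμ.1
  have hQ (k : ℕ) : MeasurableSet (queueLengthEq n k) :=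
    past.le n _ (measurableSet_queueLengthEq_past le_rfl k)
  have hE' : μ E = ∑' k, μ (E ∩ queueLengthEq n k) := by
    rw [← measure_iUnion (fun j k hjk => (disjoint_queueLengthEq n hjk).mono inter_subset_right
      inter_subset_right) (fun k => hE.inter (hQ k)), ← inter_iUnion]
    refine measure_congr ?_
    filter_upwards [hμ.ae_exists_not_queueAtLeast hp hp1 n] with x hx
    obtain ⟨k, hk⟩ := exists_mem_queueLengthEq hx
    exact propext ⟨fun h => ⟨h, mem_iUnion.2 ⟨k, hk⟩⟩, And.left⟩
  have := ENNReal.hasSum_toReal (hE' ▸ measure_ne_top μ E)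
  rwa [← ENNReal.tsum_toReal_eq fun _ => measure_ne_top _ _, ← hE'] at this

/-- Burke's theorem: the departures up to time `n` are independent of the queue length at
time `n`, and i.i.d. with success probability `1 - p`. -/
lemma measureReal_departures_preimage_allTrueOn_inter_queueLengthEq (hμ : IsBernoulliShift p μ)
    (hp0 : 0 ≤ p) (hp1 : p ≤ 1) {m n : ℤ} (hmn : m ≤ n) {s : Finset ℤ}
    (hs : s ⊆ Finset.Ioc m n) (k : ℕ) :
    μ.real (departures ⁻¹' allTrueOn s ∩ queueLengthEq n k) =
      (1 - p) ^ s.card * μ.real (queueLengthEq 0 k) := by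
  induction n, hmn using Int.leInduction generalizing s k with
  | base =>
    obtain rfl : s = ∅ := Finset.subset_empty.1 (by simpa using hs)
    simp [hμ.measureReal_queueLengthEq]
  | succ n hmn ih =>
    have hbalance := hμ.detailed_balance_queueLengthEq hp0 hp1
    have hs' : s.erase (n + 1) ⊆ Finset.Ioc m n := fun i hi => by
      have := hs (Finset.mem_of_mem_erase hi)
      simp only [Finset.mem_Ioc, Finset.mem_erase] at this hi ⊢
      omega
    have hE := measurableSet_departures_preimage_allTrueOn_past (n := n) (s := s.erase (n + 1))
      fun i hi => (Finset.mem_Ioc.1 (hs' hi)).2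
    by_cases hn : n + 1 ∈ s
    · have hpre : departures ⁻¹' allTrueOn s =
          departures ⁻¹' allTrueOn (s.erase (n + 1)) ∩ {x | departures x (n + 1) = true} := by
        conv_lhs => rw [← Finset.insert_erase hn, allTrueOn_insert]
        rfl
      rw [hpre, hμ.measureReal_inter_departures_inter_queueLengthEq hp0 hp1 hE, ih hs',
        ← Finset.card_erase_add_one hn, pow_succ]
      linear_combination (1 - p) ^ (s.erase (n + 1)).card * hbalance k
    · rw [← Finset.erase_eq_of_notMem hn]
      rcases k with _ | k
      · rw [hμ.measureReal_inter_queueLengthEq_succ_zero hp0 hp1 hE, ih hs', ih hs']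
        linear_combination (1 - p) ^ (s.erase (n + 1)).card * hbalance 0
      · rw [hμ.measureReal_inter_queueLengthEq_succ_succ hp0 hp1 hE, ih hs', ih hs']
        linear_combination (1 - p) ^ (s.erase (n + 1)).card * (hbalance (k + 1) - hbalance k)

lemma measureReal_departures_preimage_allTrueOn (hμ : IsBernoulliShift p μ) (hp : 1 / 2 < p)
    (hp1 : p ≤ 1) (s : Finset ℤ) :
    μ.real (departures ⁻¹' allTrueOn s) = (1 - p) ^ s.card := by
  have := hμ.1
  obtain ⟨N, hN0, hN⟩ : ∃ N : ℤ, 0 ≤ N ∧ ∀ i ∈ s, |i| ≤ N :=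
    ⟨∑ i ∈ s, |i|, Finset.sum_nonneg fun j _ => abs_nonneg j,
      fun i hi => Finset.single_le_sum (fun j _ => abs_nonneg j) hi⟩
  have hs : s ⊆ Finset.Ioc (-N - 1) N := fun i hi => by
    have := abs_le.1 (hN i hi)
    simp only [Finset.mem_Ioc]
    omega
  have hlaw := (hμ.hasSum_measureReal_inter_queueLengthEq hp hp1 0 MeasurableSet.univ).mul_left
    ((1 - p) ^ s.card)
  have hsum := hμ.hasSum_measureReal_inter_queueLengthEq hp hp1 N
    (measurable_departures (measurableSet_allTrueOn s))
  simp only [univ_inter, probReal_univ, mul_one] at hlaw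
  simp only [hμ.measureReal_departures_preimage_allTrueOn_inter_queueLengthEq (by linarith) hp1
    (by omega : -N - 1 ≤ N) hs] at hsum
  exact hsum.unique hlaw

end IsBernoulliShift

/-- For `1/2 < p < 1` there is a monotone factor from `B(1-p, p)` to `B(p, 1-p)`. -/
theorem monotone_factor (p : ℝ) (hp : 1 / 2 < p) (hp1 : p < 1)
    (μ ν : Measure (ℤ → Bool))
    (hμ : IsBernoulliShift p μ) (hν : IsBernoulliShift (1 - p) ν) :
    ∃ φ : (ℤ → Bool) → (ℤ → Bool),
      Measurable φ ∧
      μ.map φ = ν ∧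
      (∀ᵐ x ∂μ, φ (shift x) = shift (φ x)) ∧
      (∀ x, ∀ i : ℤ, φ x i ≤ x i) := by
  have := hμ.1
  have hshift (x : ℤ → Bool) : shift x = τ (-1) x := by ext; simp [shift]
  refine ⟨departures, measurable_departures, ext_of_allTrueOn fun s => ?_,
    ae_of_all _ fun x => ?_, departures_le⟩
  · rw [Measure.map_apply measurable_departures (measurableSet_allTrueOn s),
      hν.measure_allTrueOn, ← ofReal_measureReal,
      hμ.measureReal_departures_preimage_allTrueOn hp hp1.le]
  · rw [hshift, hshift, departures_translate]
end

section
/- Let n ≥ 1 and p ∈ (1/2, 1). Let μ_p* be the product Bernoulli(p) measure on {0,1}^n conditioned on the set B_n of nonincreasing sequences, and let μ_{1-p}* be the product Bernoulli(1-p) measure conditioned on B_n. Then there exists a monotone coupling of μ_p* and μ_{1-p}*: a probability measure ρ on {0,1}^n × {0,1}^n whose first marginal is μ_p*, whose second marginal is μ_{1-p}*, and which satisfies ρ({(x, y) : y_i ≤ x_i for all i}) = 1. -/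
def fillerSet (n : ℕ) : Finset (Fin n → Bool) :=
  Finset.univ.filter fun x => ∀ i j : Fin n, i ≤ j → x j ≤ x i

noncomputable def bernWeight (n : ℕ) (p : ℝ) (x : Fin n → Bool) : ℝ :=
  ∏ i, if x i then p else 1 - p

noncomputable def condMass (n : ℕ) (p : ℝ) (x : Fin n → Bool) : ℝ :=
  if x ∈ fillerSet n then bernWeight n p x / ∑ y ∈ fillerSet n, bernWeight n p y else 0

open Finset

def eSeq (n ℓ : ℕ) : Fin n → Bool := fun i => decide (i.val + ℓ < n)

def tc (n : ℕ) (x : Fin n → Bool) : ℕ := (Finset.univ.filter fun i => x i = true).card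

lemma card_filter_lt (n m : ℕ) :
    (Finset.univ.filter fun i : Fin n => (i : ℕ) < m).card = min m n := by
  have h1 : (Finset.univ.filter fun i : Fin n => (i : ℕ) < m).card
      = ((Finset.range n).filter (· < m)).card := by
    refine Finset.card_bij (fun a _ => (a : ℕ)) ?_ ?_ ?_
    · intro a ha; simp only [mem_filter, mem_univ, mem_range, true_and] at ha ⊢; exact ⟨a.isLt, ha⟩
    · intro a _ b _ h; exact Fin.val_injective h
    · intro b hb; simp at hb; exact ⟨⟨b, hb.1⟩, by simp [hb.2]⟩
  rw [h1, show (Finset.range n).filter (· < m) = Finset.range (min m n) by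
    ext i; simp; try omega]
  simp

lemma eSeq_mem (n ℓ : ℕ) : eSeq n ℓ ∈ fillerSet n := by
  simp only [fillerSet, mem_filter, mem_univ, true_and, eSeq]
  intro i j hij
  by_cases h : (j : ℕ) + ℓ < n
  · have : (i : ℕ) + ℓ < n := by have := (Fin.le_def.mp hij); omega
    simp [h, this]
  · simp [h]

lemma tc_eSeq (n ℓ : ℕ) (h : ℓ ≤ n) : tc n (eSeq n ℓ) = n - ℓ := by
  unfold tc eSeq
  rw [show (Finset.univ.filter fun i : Fin n => decide ((i : ℕ) + ℓ < n) = true)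
      = Finset.univ.filter fun i : Fin n => (i : ℕ) < n - ℓ by ext i; simp; try omega]
  rw [card_filter_lt]; omega

lemma tc_le (n : ℕ) (x : Fin n → Bool) : tc n x ≤ n := by
  simpa [tc] using (Finset.card_filter_le Finset.univ fun i => x i = true)

lemma eq_eSeq_of_mem (n : ℕ) (x : Fin n → Bool) (hx : x ∈ fillerSet n) :
    x = eSeq n (n - tc n x) := by
  simp only [fillerSet, mem_filter, mem_univ, true_and] at hx
  have htc := tc_le n x
  have hA : ∀ i : Fin n, x i = true → (i : ℕ) < tc n x := by
    intro i hi
    have hsub : (Finset.univ.filter fun j : Fin n => (j : ℕ) < (i : ℕ) + 1)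
        ⊆ Finset.univ.filter fun j => x j = true := by
      intro j hj
      simp only [mem_filter, mem_univ, true_and] at hj ⊢
      have hji : j ≤ i := by rw [Fin.le_def]; omega
      have := hx j i hji
      rw [hi] at this
      revert this; cases x j <;> simp
    have hcard := Finset.card_le_card hsub
    rw [card_filter_lt] at hcard
    have hin : (i : ℕ) + 1 ≤ n := i.isLt
    change min ((i : ℕ) + 1) n ≤ tc n x at hcard
    omega
  have hC : ∀ i : Fin n, x i = false → tc n x ≤ (i : ℕ) := by
    intro i hi
    have hsub : (Finset.univ.filter fun j : Fin n => x j = true)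
        ⊆ Finset.univ.filter fun j : Fin n => (j : ℕ) < (i : ℕ) := by
      intro j hj
      simp only [mem_filter, mem_univ, true_and] at hj ⊢
      by_contra h
      have hij : i ≤ j := by rw [Fin.le_def]; omega
      have := hx i j hij
      rw [hi, hj] at this
      exact absurd this (by decide)
    have hcard := Finset.card_le_card hsub
    rw [card_filter_lt] at hcard
    change tc n x ≤ min (i : ℕ) n at hcard
    omega
  funext i
  by_cases h : (i : ℕ) < tc n x
  · have hxi : x i = true := by
      by_contra h2
      have hfi : x i = false := by revert h2; cases x i <;> simp
      exact absurd (hC i hfi) (by omega)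
    rw [hxi]; unfold eSeq; symm; simp; omega
  · have hfi : x i = false := by
      by_contra h2
      have hti : x i = true := by revert h2; cases x i <;> simp
      exact h (hA i hti)
    rw [hfi]; unfold eSeq; symm; simp; omega

lemma eSeq_injOn (n : ℕ) : Set.InjOn (eSeq n) (Finset.range (n + 1)) := by
  intro a ha b hb hab
  simp only [coe_range, Set.mem_Iio] at ha hb
  have h1 := tc_eSeq n a (by omega)
  have h2 := tc_eSeq n b (by omega)
  rw [hab, h2] at h1
  omega

lemma filler_eq_image (n : ℕ) :
    fillerSet n = (Finset.range (n + 1)).image (eSeq n) := by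
  ext x
  constructor
  · intro hx
    refine Finset.mem_image.mpr ⟨n - tc n x, ?_, (eq_eSeq_of_mem n x hx).symm⟩
    simp
  · intro hx
    obtain ⟨ℓ, _, rfl⟩ := Finset.mem_image.mp hx
    exact eSeq_mem n ℓ

noncomputable def aW (n : ℕ) (p : ℝ) (ℓ : ℕ) : ℝ := p ^ (n - ℓ) * (1 - p) ^ ℓ

noncomputable def TT (n : ℕ) (p : ℝ) : ℝ := ∑ ℓ ∈ Finset.range (n + 1), aW n p ℓ

lemma bern_eSeq (n : ℕ) (p : ℝ) (ℓ : ℕ) (h : ℓ ≤ n) :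
    bernWeight n p (eSeq n ℓ) = aW n p ℓ := by
  unfold bernWeight eSeq aW
  rw [← Finset.prod_filter_mul_prod_filter_not Finset.univ (fun i : Fin n => decide ((i : ℕ) + ℓ < n) = true)]
  rw [Finset.prod_congr rfl (fun i hi => if_pos (by simpa using (Finset.mem_filter.mp hi).2)),
    Finset.prod_congr rfl (fun i hi => if_neg (by simpa using (Finset.mem_filter.mp hi).2)),
    Finset.prod_const, Finset.prod_const]
  congr 1
  · congr 1
    rw [show (Finset.univ.filter fun i : Fin n => decide ((i : ℕ) + ℓ < n) = true)
        = Finset.univ.filter fun i : Fin n => (i : ℕ) < n - ℓ by ext i; simp; try omega]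
    rw [card_filter_lt]; try omega
  · congr 1
    rw [show (Finset.univ.filter fun i : Fin n => ¬ decide ((i : ℕ) + ℓ < n) = true)
        = Finset.univ.filter fun i : Fin n => (i : ℕ) < n ∧ ¬ ((i : ℕ) < n - ℓ) by ext i; simp; try omega]
    have : (Finset.univ.filter fun i : Fin n => (i : ℕ) < n ∧ ¬ ((i : ℕ) < n - ℓ)).card
        = n - (n - ℓ) := by
      have h2 : (Finset.univ.filter fun i : Fin n => (i : ℕ) < n ∧ ¬ ((i : ℕ) < n - ℓ))
          = Finset.univ \ (Finset.univ.filter fun i : Fin n => (i : ℕ) < n - ℓ) := by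
        ext i; simp [i.isLt]
      rw [h2, Finset.card_sdiff_of_subset (Finset.filter_subset _ _), card_filter_lt]
      simp; try omega
    rw [this]; try omega

lemma sum_bern (n : ℕ) (p : ℝ) :
    ∑ y ∈ fillerSet n, bernWeight n p y = TT n p := by
  rw [filler_eq_image, Finset.sum_image (fun a ha b hb => eSeq_injOn n (by simpa using ha) (by simpa using hb))]
  exact Finset.sum_congr rfl fun ℓ hℓ => bern_eSeq n p ℓ (by simp at hℓ; omega)

lemma condMass_eSeq (n : ℕ) (p : ℝ) (ℓ : ℕ) (h : ℓ ≤ n) :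
    condMass n p (eSeq n ℓ) = aW n p ℓ / TT n p := by
  rw [condMass, if_pos (eSeq_mem n ℓ), sum_bern, bern_eSeq n p ℓ h]

noncomputable def Fpre (n : ℕ) (p : ℝ) (k : ℕ) : ℝ :=
  ∑ j ∈ Finset.range k, aW n p j / TT n p

noncomputable def Gpre (n : ℕ) (p : ℝ) (k : ℕ) : ℝ :=
  ∑ j ∈ Finset.range k, aW n p (n - j) / TT n p

noncomputable def wgt (n : ℕ) (p : ℝ) (ℓ m : ℕ) : ℝ :=
  max 0 (min (Fpre n p (ℓ + 1)) (Gpre n p (m + 1)) - max (Fpre n p ℓ) (Gpre n p m))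

section params
variable {n : ℕ} {p : ℝ} (hp : 1 / 2 < p) (hp1 : p < 1)
include hp hp1

lemma aW_pos (ℓ : ℕ) : 0 < aW n p ℓ := by
  unfold aW
  have h1 : (0:ℝ) < p := by linarith
  have h2 : (0:ℝ) < 1 - p := by linarith
  positivity

lemma TT_pos : 0 < TT n p := by
  unfold TT
  exact Finset.sum_pos (fun ℓ _ => aW_pos hp hp1 ℓ) (by simp)

lemma aW_anti {k j : ℕ} (hkj : k ≤ j) (hj : j ≤ n) : aW n p j ≤ aW n p k := by
  unfold aW
  have h1 : (0:ℝ) < p := by linarith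
  have h2 : (0:ℝ) ≤ 1 - p := by linarith
  set d := j - k with hd
  have e1 : p ^ (n - k) = p ^ (n - j) * p ^ d := by rw [← pow_add]; congr 1; omega
  have e2 : (1 - p) ^ j = (1 - p) ^ k * (1 - p) ^ d := by rw [← pow_add]; congr 1; omega
  rw [e1, e2]
  have h4 : (1 - p) ^ d ≤ p ^ d := pow_le_pow_left₀ h2 (by linarith) d
  have key := mul_le_mul_of_nonneg_left h4
    (show (0:ℝ) ≤ p ^ (n - j) * (1 - p) ^ k by positivity)
  nlinarith [key]

lemma Fpre_mono : Monotone (Fpre n p) := by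
  apply monotone_nat_of_le_succ
  intro k
  rw [Fpre, Fpre, Finset.sum_range_succ]
  have := aW_pos hp hp1 (n := n) k
  have := TT_pos (n := n) hp hp1
  have : 0 ≤ aW n p k / TT n p := by positivity
  linarith

lemma Gpre_mono : Monotone (Gpre n p) := by
  apply monotone_nat_of_le_succ
  intro k
  rw [Gpre, Gpre, Finset.sum_range_succ]
  have := aW_pos hp hp1 (n := n) (n - k)
  have := TT_pos (n := n) hp hp1
  have : 0 ≤ aW n p (n - k) / TT n p := by positivity
  linarith

lemma Gpre_eq {k : ℕ} (hk : k ≤ n + 1) :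
    Gpre n p k = ∑ j ∈ Finset.range k, aW n p (n + 1 - k + j) / TT n p := by
  rw [Gpre, ← Finset.sum_range_reflect]
  apply Finset.sum_congr rfl
  intro j hj
  simp only [Finset.mem_range] at hj
  congr 2
  omega

lemma F_ge_G {k : ℕ} (hk : k ≤ n + 1) : Gpre n p k ≤ Fpre n p k := by
  rw [Gpre_eq hp hp1 hk, Fpre]
  apply Finset.sum_le_sum
  intro j hj
  simp only [Finset.mem_range] at hj
  have hT := TT_pos (n := n) hp hp1
  have h := aW_anti hp hp1 (show j ≤ n + 1 - k + j by omega) (show n + 1 - k + j ≤ n by omega)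
  gcongr

lemma Gpre_total : Gpre n p (n + 1) = Fpre n p (n + 1) := by
  rw [Gpre_eq hp hp1 le_rfl, Fpre]
  apply Finset.sum_congr rfl
  intro j hj
  congr 2
  omega

end params

lemma key_identity (b b' c d : ℝ) (hb : b ≤ b') (hdc : d ≤ c) :
    max d (min c b') - max d (min c b) = max 0 (min c b' - max d b) := by
  rcases le_total b' d with h1 | h1 <;> rcases le_total c b with h2 | h2 <;>
    rcases le_total d b with h3 | h3 <;> rcases le_total c b' with h4 | h4 <;>
    simp [min_def, max_def] <;> split_ifs <;> linarith

lemma Fpre_nonneg (n : ℕ) (p : ℝ) (hp : 1 / 2 < p) (hp1 : p < 1) (k : ℕ) :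
    0 ≤ Fpre n p k := by
  apply Finset.sum_nonneg
  intro j _
  have := aW_pos (n := n) hp hp1 j
  have := TT_pos (n := n) hp hp1
  positivity

lemma Gpre_nonneg (n : ℕ) (p : ℝ) (hp : 1 / 2 < p) (hp1 : p < 1) (k : ℕ) :
    0 ≤ Gpre n p k := by
  apply Finset.sum_nonneg
  intro j _
  have := aW_pos (n := n) hp hp1 (n - j)
  have := TT_pos (n := n) hp hp1
  positivity

lemma Fpre_zero (n : ℕ) (p : ℝ) : Fpre n p 0 = 0 := by simp [Fpre]
lemma Gpre_zero (n : ℕ) (p : ℝ) : Gpre n p 0 = 0 := by simp [Gpre]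

lemma row_sum (n : ℕ) (p : ℝ) (hp : 1 / 2 < p) (hp1 : p < 1) {ℓ : ℕ} (hℓ : ℓ ≤ n) :
    ∑ m ∈ Finset.range (n + 1), wgt n p ℓ m = aW n p ℓ / TT n p := by
  set c := Fpre n p (ℓ + 1) with hc
  set d := Fpre n p ℓ with hd
  have hdc : d ≤ c := Fpre_mono hp hp1 (Nat.le_succ ℓ)
  have hd0 : 0 ≤ d := Fpre_nonneg n p hp hp1 ℓ
  have hctot : c ≤ Fpre n p (n + 1) := Fpre_mono hp hp1 (by omega)
  have hGF : Gpre n p (n + 1) = Fpre n p (n + 1) := Gpre_total hp hp1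
  have hstep : ∀ m ∈ Finset.range (n + 1), wgt n p ℓ m
      = max d (min c (Gpre n p (m + 1))) - max d (min c (Gpre n p m)) := by
    intro m _
    rw [wgt, key_identity _ _ c d (Gpre_mono hp hp1 (Nat.le_succ m)) hdc]
  rw [Finset.sum_congr rfl hstep,
    Finset.sum_range_sub (fun m => max d (min c (Gpre n p m)))]
  have h1 : max d (min c (Gpre n p (n + 1))) = c := by
    rw [hGF, min_eq_left hctot, max_eq_right hdc]
  have h2 : max d (min c (Gpre n p 0)) = d := by
    rw [Gpre_zero, min_eq_right (by linarith), max_eq_left hd0]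
  rw [h1, h2, hc, hd, Fpre, Fpre, Finset.sum_range_succ]
  ring

lemma col_sum (n : ℕ) (p : ℝ) (hp : 1 / 2 < p) (hp1 : p < 1) {m : ℕ} (hm : m ≤ n) :
    ∑ ℓ ∈ Finset.range (n + 1), wgt n p ℓ m = aW n p (n - m) / TT n p := by
  set c := Gpre n p (m + 1) with hc
  set d := Gpre n p m with hd
  have hdc : d ≤ c := Gpre_mono hp hp1 (Nat.le_succ m)
  have hd0 : 0 ≤ d := Gpre_nonneg n p hp hp1 m
  have hctot : c ≤ Gpre n p (n + 1) := Gpre_mono hp hp1 (by omega)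
  have hGF : Gpre n p (n + 1) = Fpre n p (n + 1) := Gpre_total hp hp1
  have hstep : ∀ ℓ ∈ Finset.range (n + 1), wgt n p ℓ m
      = max d (min c (Fpre n p (ℓ + 1))) - max d (min c (Fpre n p ℓ)) := by
    intro ℓ _
    rw [wgt, key_identity _ _ c d (Fpre_mono hp hp1 (Nat.le_succ ℓ)) hdc,
      min_comm c (Fpre n p (ℓ + 1)), max_comm d (Fpre n p ℓ)]
  rw [Finset.sum_congr rfl hstep,
    Finset.sum_range_sub (fun ℓ => max d (min c (Fpre n p ℓ)))]
  have h1 : max d (min c (Fpre n p (n + 1))) = c := by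
    rw [← hGF, min_eq_left hctot, max_eq_right hdc]
  have h2 : max d (min c (Fpre n p 0)) = d := by
    rw [Fpre_zero, min_eq_right (by linarith), max_eq_left hd0]
  rw [h1, h2, hc, hd, Gpre, Gpre, Finset.sum_range_succ]
  ring

lemma wgt_nonneg (n : ℕ) (p : ℝ) (ℓ m : ℕ) : 0 ≤ wgt n p ℓ m := le_max_left _ _

lemma wgt_support (n : ℕ) (p : ℝ) (hp : 1 / 2 < p) (hp1 : p < 1) {ℓ m : ℕ}
    (hℓ : ℓ ≤ n) (hw : wgt n p ℓ m ≠ 0) : ℓ ≤ m := by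
  have hpos : 0 < min (Fpre n p (ℓ + 1)) (Gpre n p (m + 1))
      - max (Fpre n p ℓ) (Gpre n p m) := by
    by_contra h
    exact hw (by rw [wgt, max_eq_left (by linarith)])
  have h1 : Fpre n p ℓ < Gpre n p (m + 1) := by
    have := min_le_right (Fpre n p (ℓ + 1)) (Gpre n p (m + 1))
    have := le_max_left (Fpre n p ℓ) (Gpre n p m)
    linarith
  have h2 : Gpre n p ℓ ≤ Fpre n p ℓ := F_ge_G hp hp1 (by omega)
  by_contra h
  have : Gpre n p (m + 1) ≤ Gpre n p ℓ := Gpre_mono hp hp1 (by omega)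
  linarith

lemma aW_symm (n : ℕ) (p : ℝ) {m : ℕ} (hm : m ≤ n) :
    aW n (1 - p) m = aW n p (n - m) := by
  unfold aW
  rw [show (1 : ℝ) - (1 - p) = p by ring, show n - (n - m) = m by omega]
  ring

lemma TT_symm (n : ℕ) (p : ℝ) : TT n (1 - p) = TT n p := by
  unfold TT
  rw [Finset.sum_congr rfl (fun ℓ hℓ => aW_symm n p (by simp at hℓ; omega))]
  rw [← Finset.sum_range_reflect (fun j => aW n p j) (n + 1)]
  apply Finset.sum_congr rfl
  intro j hj
  simp only [Finset.mem_range] at hj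
  congr 1

/-- For `p ∈ (1/2, 1)` there is a monotone coupling of `μ_p*` and `μ_{1-p}*`:
a probability mass function `ρ` on `{0,1}^n × {0,1}^n` with first marginal `μ_p*`, second
marginal `μ_{1-p}*`, supported on pairs `(x, y)` with `y_i ≤ x_i` for all `i`. -/
theorem monotone_coupling_of_conditioned (n : ℕ) (hn : 1 ≤ n) (p : ℝ)
    (hp : 1 / 2 < p) (hp1 : p < 1) :
    ∃ ρ : (Fin n → Bool) × (Fin n → Bool) → ℝ,
      (∀ z, 0 ≤ ρ z) ∧
      (∀ x, ∑ y, ρ (x, y) = condMass n p x) ∧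
      (∀ y, ∑ x, ρ (x, y) = condMass n (1 - p) y) ∧
      (∀ x y, ρ (x, y) ≠ 0 → ∀ i, y i ≤ x i) := by
  classical
  refine ⟨fun z => if z.1 ∈ fillerSet n ∧ z.2 ∈ fillerSet n then
      wgt n p (n - tc n z.1) (n - tc n z.2) else 0, ?_, ?_, ?_, ?_⟩
  · intro z
    dsimp only
    split_ifs
    · exact wgt_nonneg n p _ _
    · exact le_rfl
  · intro x
    by_cases hx : x ∈ fillerSet n
    · have hℓ : n - tc n x ≤ n := by omega
      have hxe := eq_eSeq_of_mem n x hx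
      calc ∑ y, (if x ∈ fillerSet n ∧ y ∈ fillerSet n then
            wgt n p (n - tc n x) (n - tc n y) else 0)
          = ∑ y ∈ Finset.univ ∩ fillerSet n, wgt n p (n - tc n x) (n - tc n y) := by
            rw [← Finset.sum_ite_mem]
            exact Finset.sum_congr rfl fun y _ => by simp [hx]
        _ = ∑ y ∈ (Finset.range (n + 1)).image (eSeq n),
              wgt n p (n - tc n x) (n - tc n y) := by
            rw [Finset.univ_inter, filler_eq_image]
        _ = ∑ m ∈ Finset.range (n + 1), wgt n p (n - tc n x) (n - tc n (eSeq n m)) :=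
            Finset.sum_image (fun a ha b hb =>
              eSeq_injOn n (by simpa using ha) (by simpa using hb))
        _ = ∑ m ∈ Finset.range (n + 1), wgt n p (n - tc n x) m := by
            apply Finset.sum_congr rfl
            intro m hm
            simp only [Finset.mem_range] at hm
            rw [tc_eSeq n m (by omega)]
            congr 1
            omega
        _ = aW n p (n - tc n x) / TT n p := row_sum n p hp hp1 hℓ
        _ = condMass n p x := by
            conv_rhs => rw [hxe]
            rw [condMass_eSeq n p _ hℓ]
    · rw [condMass, if_neg hx]
      apply Finset.sum_eq_zero
      intro y _
      simp [hx]
  · intro y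
    by_cases hy : y ∈ fillerSet n
    · have hm : n - tc n y ≤ n := by omega
      have hye := eq_eSeq_of_mem n y hy
      calc ∑ x, (if x ∈ fillerSet n ∧ y ∈ fillerSet n then
            wgt n p (n - tc n x) (n - tc n y) else 0)
          = ∑ x ∈ Finset.univ ∩ fillerSet n, wgt n p (n - tc n x) (n - tc n y) := by
            rw [← Finset.sum_ite_mem]
            exact Finset.sum_congr rfl fun x _ => by simp [hy]
        _ = ∑ x ∈ (Finset.range (n + 1)).image (eSeq n),
              wgt n p (n - tc n x) (n - tc n y) := by
            rw [Finset.univ_inter, filler_eq_image]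
        _ = ∑ ℓ ∈ Finset.range (n + 1),
              wgt n p (n - tc n (eSeq n ℓ)) (n - tc n y) :=
            Finset.sum_image (fun a ha b hb =>
              eSeq_injOn n (by simpa using ha) (by simpa using hb))
        _ = ∑ ℓ ∈ Finset.range (n + 1), wgt n p ℓ (n - tc n y) := by
            apply Finset.sum_congr rfl
            intro ℓ hℓ
            simp only [Finset.mem_range] at hℓ
            rw [tc_eSeq n ℓ (by omega)]
            congr 1
            omega
        _ = aW n p (n - (n - tc n y)) / TT n p := col_sum n p hp hp1 hm
        _ = condMass n (1 - p) y := by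
            conv_rhs => rw [hye]
            rw [condMass_eSeq n (1 - p) _ hm, aW_symm n p hm, TT_symm n p]
    · rw [condMass, if_neg hy]
      apply Finset.sum_eq_zero
      intro x _
      simp [hy]
  · intro x y hρ i
    by_cases h : x ∈ fillerSet n ∧ y ∈ fillerSet n
    · have hw : wgt n p (n - tc n x) (n - tc n y) ≠ 0 := by
        simpa [h] using hρ
      have hle := wgt_support n p hp hp1 (show n - tc n x ≤ n by omega) hw
      have hx := eq_eSeq_of_mem n x h.1
      have hy := eq_eSeq_of_mem n y h.2
      rw [hx, hy]
      unfold eSeq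
      by_cases hyi : (i : ℕ) + (n - tc n y) < n
      · have hxi : (i : ℕ) + (n - tc n x) < n := by omega
        simp [hyi, hxi]
      · simp [hyi]
    · exact absurd (by simp [h]) hρ
end

section
/- Let p ∈ (1/2, 1) and let μ and ν be the product measures on {0,1}^ℤ with one-dimensional marginals (1-p, p) and (p, 1-p) respectively. Define the hat map h : {0,1}^ℤ → {0,1}^ℤ by h(x)_i = 1 if the coordinate i lies in a primary marker of x, i.e. if (x_i = 0 and x_{i+1} = 1) or (x_{i-1} = 0 and x_i = 1), and h(x)_i = 0 otherwise. Then the pushforward of μ under h equals the pushforward of ν under h; that is, the law of the primary marker process is the same under μ and ν. -/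
open MeasureTheory

/-- The hat map: `h(x)_i = 1` iff coordinate `i` lies in a primary marker of `x`,
i.e. iff (`x_i = 0` and `x_{i+1} = 1`) or (`x_{i-1} = 0` and `x_i = 1`). -/
def hatMap (x : ℤ → Bool) : ℤ → Bool := fun i =>
  (!x i && x (i + 1)) || (!x (i - 1) && x i)

/-!
Read `x` through its marker indicators `marker x i = !x i && x (i + 1)`. Prepending a letter
`c` to a word that starts with `b` prepends the marker `!c && b`, so the probability
`Z_p(P, c)` that `x a = c` and the marker word on `[a, a + n)` lies in `P` obeys a two-state
recursion (`markerProb`). By induction on `n`, both `Z_p(P, 1) + Z_p(P, 0)` and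
`(1 - p) Z_p(P, 1)` are unchanged by `p ↦ 1 - p`; the second invariant is what carries the
first across a step. Every event of the hat process on a finite window is an event of the
marker word on a slightly larger window, so `μ` and `ν` agree on all finite-dimensional
distributions of the hat process.
-/

def marker (x : ℤ → Bool) (i : ℤ) : Bool := !x i && x (i + 1)

lemma hatMap_eq_marker (x : ℤ → Bool) (i : ℤ) :
    hatMap x i = (marker x i || marker x (i - 1)) := by
  simp [hatMap, marker]

lemma measurable_hatMap : Measurable hatMap := by
  refine measurable_pi_iff.mpr fun i => ?_
  unfold hatMap
  fun_prop

def markerWord (x : ℤ → Bool) (a : ℤ) : ℕ → List Bool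
  | 0 => []
  | n + 1 => marker x a :: markerWord x (a + 1) n

lemma marker_eq_of_markerWord_eq {x y : ℤ → Bool} {a : ℤ} {n : ℕ}
    (h : markerWord x a n = markerWord y a n) {j : ℤ} (haj : a ≤ j) (hjn : j < a + n) :
    marker x j = marker y j := by
  induction n generalizing a with
  | zero => omega
  | succ n ih =>
    obtain ⟨hhead, htail⟩ := List.cons.inj h
    rcases haj.eq_or_lt with rfl | haj
    · exact hhead
    · exact ih htail (by omega) (by push_cast at hjn; omega)

lemma hatMap_eq_of_markerWord_eq {x y : ℤ → Bool} {a : ℤ} {n : ℕ}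
    (h : markerWord x a n = markerWord y a n) {i : ℤ} (hai : a < i) (hin : i < a + n) :
    hatMap x i = hatMap y i := by
  rw [hatMap_eq_marker, hatMap_eq_marker, marker_eq_of_markerWord_eq h (by omega) hin,
    marker_eq_of_markerWord_eq h (by omega) (by omega)]

lemma exists_window (I : Finset ℤ) :
    ∃ (a : ℤ) (n : ℕ), ∀ i ∈ I, a < i ∧ i < a + n := by
  obtain ⟨lo, hlo⟩ := I.bddBelow
  obtain ⟨hi, hhi⟩ := I.bddAbove
  refine ⟨lo - 1, (hi - lo + 2).toNat, fun i hiI => ?_⟩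
  have := hlo hiI
  have := hhi hiI
  omega

lemma preimage_restrict_hatMap_eq {I : Finset ℤ} {a : ℤ} {n : ℕ}
    (hI : ∀ i ∈ I, a < i ∧ i < a + n) (s : Set (I → Bool)) :
    (I.restrict ∘ hatMap) ⁻¹' s
      = {x | markerWord x a n ∈ (markerWord · a n) '' ((I.restrict ∘ hatMap) ⁻¹' s)} := by
  ext x
  refine ⟨fun hx => ⟨x, hx, rfl⟩, fun ⟨y, hy, hyx⟩ => ?_⟩
  have : I.restrict (hatMap x) = I.restrict (hatMap y) :=
    funext fun i => hatMap_eq_of_markerWord_eq hyx.symm (hI i i.2).1 (hI i i.2).2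
  simpa [Set.mem_preimage, Function.comp_apply, this] using hy

open Classical in
/-- Under the Bernoulli shift with parameter `p`, `markerProb p n P c` is the probability that
`x a = c` and `markerWord x a n ∈ P` (`IsBernoulliShift.measure_cylinder_inter_markerWord`). -/
noncomputable def markerProb (p : ℝ) : ℕ → Set (List Bool) → Bool → ℝ
  | 0, P, c => if [] ∈ P then (if c then p else 1 - p) else 0
  | n + 1, P, c => (if c then p else 1 - p) * ∑ b, markerProb p n {M | (!c && b) :: M ∈ P} b

lemma markerProb_nonneg {p : ℝ} (hp0 : 0 ≤ p) (hp1 : p ≤ 1) (n : ℕ) (P : Set (List Bool))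
    (c : Bool) : 0 ≤ markerProb p n P c := by
  have hw (c : Bool) : 0 ≤ (if c then p else 1 - p) := by split <;> linarith
  induction n generalizing P c with
  | zero => unfold markerProb; split <;> simp [hw]
  | succ n ih => exact mul_nonneg (hw c) (Finset.sum_nonneg fun b _ => ih _ b)

theorem markerProb_one_sub (p : ℝ) (n : ℕ) (P : Set (List Bool)) :
    markerProb p n P true + markerProb p n P false
      = markerProb (1 - p) n P true + markerProb (1 - p) n P false ∧
    (1 - p) * markerProb p n P true = p * markerProb (1 - p) n P true := by
  induction n generalizing P with
  | zero =>
    unfold markerProb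
    split
    · simp only [if_true, Bool.false_eq_true, if_false]
      constructor <;> ring
    · simp
  | succ n ih =>
    obtain ⟨hF, hT⟩ := ih {M | false :: M ∈ P}
    obtain ⟨-, hT'⟩ := ih {M | true :: M ∈ P}
    simp only [markerProb, Fintype.sum_bool, Bool.not_true, Bool.not_false, Bool.false_and,
      Bool.true_and, if_true, Bool.false_eq_true, if_false]
    constructor
    · linear_combination hF + hT' - hT
    · linear_combination (1 - p) * p * hF

lemma measure_inter_eval_true_add_false {ι : Type*} (μ : Measure (ι → Bool))
    (E : Set (ι → Bool)) (a : ι) :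
    μ (E ∩ {x | x a = true}) + μ (E ∩ {x | x a = false}) = μ E := by
  have hfalse : E \ {x | x a = true} = E ∩ {x | x a = false} := by
    ext x; simp
  rw [← hfalse, measure_inter_add_sdiff _
    (measurableSet_eq_fun (measurable_pi_apply a) measurable_const)]

lemma cylinder_inter_coord_eq {ι α : Type*} [DecidableEq ι] {u : Finset ι} {a : ι}
    (ha : a ∉ u) (g : ι → α) (c : α) :
    {x : ι → α | ∀ i ∈ u, x i = g i} ∩ {x | x a = c}
      = {x | ∀ i ∈ insert a u, x i = Function.update g a c i} := by
  ext x
  simp only [Set.mem_inter_iff, Set.mem_ofPred_eq, Finset.forall_mem_insert,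
    Function.update_self]
  refine ⟨fun ⟨hu, hc⟩ => ⟨hc, fun i hi => ?_⟩, fun ⟨hc, hu⟩ => ⟨fun i hi => ?_, hc⟩⟩
  · rw [Function.update_of_ne (ne_of_mem_of_not_mem hi ha)]; exact hu i hi
  · rw [hu i hi, Function.update_of_ne (ne_of_mem_of_not_mem hi ha)]

namespace IsBernoulliShift

variable {p : ℝ} {μ : Measure (ℤ → Bool)}

lemma mem_Icc (hμ : IsBernoulliShift p μ) : p ∈ Set.Icc 0 1 := by
  have := hμ.1
  have hone (b : Bool) : ENNReal.ofReal (if b then p else 1 - p) ≤ 1 := by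
    simpa using (hμ.2 {0} fun _ => b).symm.trans_le prob_le_one
  have h1 := hone true
  have h0 := hone false
  simp only [if_true, Bool.false_eq_true, if_false, ENNReal.ofReal_le_one] at h1 h0
  exact ⟨by linarith, h1⟩

lemma measure_cylinder_inter_coord (hμ : IsBernoulliShift p μ) {u : Finset ℤ} {a : ℤ}
    (ha : a ∉ u) (g : ℤ → Bool) (c : Bool) :
    μ ({x | ∀ i ∈ u, x i = g i} ∩ {x | x a = c})
      = μ {x | ∀ i ∈ u, x i = g i} * ENNReal.ofReal (if c then p else 1 - p) := by
  obtain ⟨hp0, hp1⟩ := hμ.mem_Icc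
  rw [cylinder_inter_coord_eq ha, hμ.2, hμ.2, Finset.prod_insert ha, Function.update_self,
    mul_comm, ENNReal.ofReal_mul (Finset.prod_nonneg fun i _ => by split <;> linarith)]
  congr 2
  exact Finset.prod_congr rfl fun i hi => by
    rw [Function.update_of_ne (ne_of_mem_of_not_mem hi ha)]

lemma measure_cylinder_inter_markerWord (hμ : IsBernoulliShift p μ) {n : ℕ} {a : ℤ}
    {u : Finset ℤ} (g : ℤ → Bool) (c : Bool) (P : Set (List Bool)) (hu : ∀ i ∈ u, i < a) :
    μ ({x | ∀ i ∈ u, x i = g i} ∩ {x | x a = c ∧ markerWord x a n ∈ P})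
      = μ {x | ∀ i ∈ u, x i = g i} * ENNReal.ofReal (markerProb p n P c) := by
  obtain ⟨hp0, hp1⟩ := hμ.mem_Icc
  have hw (c : Bool) : 0 ≤ (if c then p else 1 - p) := by split <;> linarith
  have ha : a ∉ u := fun h => (hu a h).false
  induction n generalizing a u g c P with
  | zero =>
    by_cases hP : [] ∈ P
    · simpa [markerWord, markerProb, hP] using hμ.measure_cylinder_inter_coord ha g c
    · simp [markerWord, markerProb, hP]
  | succ n ih =>
    have hu' : ∀ i ∈ insert a u, i < a + 1 := by
      intro i hi
      rcases Finset.mem_insert.mp hi with rfl | hi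
      · omega
      · have := hu i hi; omega
    set E := {x : ℤ → Bool | ∀ i ∈ u, x i = g i} ∩ {x | x a = c ∧ markerWord x a (n + 1) ∈ P}
    have hslice (b : Bool) : μ (E ∩ {x | x (a + 1) = b}) = μ {x | ∀ i ∈ u, x i = g i} *
        ENNReal.ofReal ((if c then p else 1 - p) * markerProb p n {M | (!c && b) :: M ∈ P} b) := by
      have hE : E ∩ {x | x (a + 1) = b}
          = ({x : ℤ → Bool | ∀ i ∈ u, x i = g i} ∩ {x | x a = c}) ∩
              {x | x (a + 1) = b ∧ markerWord x (a + 1) n ∈ {M | (!c && b) :: M ∈ P}} := by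
        ext x
        simp only [E, markerWord, marker, Set.mem_inter_iff, Set.mem_ofPred_eq]
        grind
      rw [hE, cylinder_inter_coord_eq ha, ih _ _ _ hu' fun h => (hu' _ h).false,
        ← cylinder_inter_coord_eq ha, hμ.measure_cylinder_inter_coord ha, mul_assoc,
        ENNReal.ofReal_mul (hw c)]
    rw [← measure_inter_eval_true_add_false μ E (a + 1), hslice, hslice, ← mul_add,
      ← ENNReal.ofReal_add (mul_nonneg (hw c) (markerProb_nonneg hp0 hp1 _ _ _))
        (mul_nonneg (hw c) (markerProb_nonneg hp0 hp1 _ _ _)),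
      markerProb, Fintype.sum_bool, mul_add]

lemma measure_markerWord_mem (hμ : IsBernoulliShift p μ) (a : ℤ) (n : ℕ) (P : Set (List Bool)) :
    μ {x | markerWord x a n ∈ P}
      = ENNReal.ofReal (markerProb p n P true + markerProb p n P false) := by
  obtain ⟨hp0, hp1⟩ := hμ.mem_Icc
  have := hμ.1
  have hslice (c : Bool) :
      μ ({x | markerWord x a n ∈ P} ∩ {x | x a = c}) = ENNReal.ofReal (markerProb p n P c) := by
    rw [Set.inter_comm, ← Set.ofPred_and]
    simpa using hμ.measure_cylinder_inter_markerWord (u := ∅) (fun _ => c) c P (by simp)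
  rw [← measure_inter_eval_true_add_false μ _ a, hslice, hslice,
    ENNReal.ofReal_add (markerProb_nonneg hp0 hp1 _ _ _) (markerProb_nonneg hp0 hp1 _ _ _)]

end IsBernoulliShift

theorem hatMap_pushforward_eq_general (p : ℝ)
    (μ ν : Measure (ℤ → Bool))
    (hμ : IsBernoulliShift p μ) (hν : IsBernoulliShift (1 - p) ν) :
    μ.map hatMap = ν.map hatMap := by
  have := hν.1
  refine IsProjectiveLimit.unique (P := fun I => (ν.map hatMap).map I.restrict)
    (fun I => ?_) fun I => rfl
  obtain ⟨a, n, hI⟩ := exists_window I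
  have hrestrict := Finset.measurable_restrict (X := fun _ : ℤ => Bool) I
  ext s hs
  dsimp only
  rw [Measure.map_map hrestrict measurable_hatMap, Measure.map_map hrestrict measurable_hatMap,
    Measure.map_apply (hrestrict.comp measurable_hatMap) hs,
    Measure.map_apply (hrestrict.comp measurable_hatMap) hs, preimage_restrict_hatMap_eq hI, hμ.measure_markerWord_mem, hν.measure_markerWord_mem,
    (markerProb_one_sub p n _).1]

/-- For `p ∈ (1/2, 1)`, the law of the primary marker process is the same under
`μ = (1-p, p)^ℤ` and `ν = (p, 1-p)^ℤ`: the pushforwards under the hat map agree. -/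
theorem hatMap_pushforward_eq (p : ℝ) (hp : 1 / 2 < p) (hp1 : p < 1)
    (μ ν : Measure (ℤ → Bool))
    (hμ : IsBernoulliShift p μ) (hν : IsBernoulliShift (1 - p) ν) :
    μ.map hatMap = ν.map hatMap :=
  hatMap_pushforward_eq_general p μ ν hμ hν
end

section
/- (Strassen's theorem for finite totally ordered sets) Let p and q be probability vectors on {0, 1, ..., N-1}. There exists a monotone coupling of p and q — a probability measure ρ on {0,...,N-1} × {0,...,N-1} with first marginal p, second marginal q, and ρ({(n, m) : n ≥ m}) = 1 — if and only if ∑_{i=0}^{k} p_i ≤ ∑_{i=0}^{k} q_i for all 0 ≤ k < N. -/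
/-- `p` is a probability vector on `{0, ..., N-1}`. -/
def IsProbVector {N : ℕ} (p : Fin N → ℝ) : Prop :=
  (∀ i, 0 ≤ p i) ∧ ∑ i, p i = 1

/-- `p` stochastically dominates `q`: `∑_{i=0}^k p_i ≤ ∑_{i=0}^k q_i` for all `k`. -/
def StochDom {N : ℕ} (p q : Fin N → ℝ) : Prop :=
  ∀ k : Fin N, ∑ i ∈ Finset.univ.filter (· ≤ k), p i ≤ ∑ i ∈ Finset.univ.filter (· ≤ k), q i

open Finset

noncomputable def cum {N : ℕ} (p : Fin N → ℝ) (k : ℕ) : ℝ :=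
  ∑ i ∈ Finset.range k, if h : i < N then p ⟨i, h⟩ else 0

lemma cum_zero {N : ℕ} (p : Fin N → ℝ) : cum p 0 = 0 := by simp [cum]

lemma cum_succ {N : ℕ} (p : Fin N → ℝ) (a : Fin N) :
    cum p ((a : ℕ) + 1) = cum p a + p a := by
  simp [cum, Finset.sum_range_succ, a.isLt]

lemma cum_mono {N : ℕ} {p : Fin N → ℝ} (hp : ∀ i, 0 ≤ p i) :
    Monotone (cum p) := by
  apply monotone_nat_of_le_succ
  intro n
  simp only [cum, Finset.sum_range_succ]
  have : (0:ℝ) ≤ if h : n < N then p ⟨n, h⟩ else 0 := by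
    split <;> simp [hp _]
  linarith

lemma cum_N {N : ℕ} (p : Fin N → ℝ) : cum p N = ∑ i, p i := by
  rw [cum, ← Fin.sum_univ_eq_sum_range (fun i => if h : i < N then p ⟨i, h⟩ else 0)]
  exact Finset.sum_congr rfl fun i _ => by simp [i.isLt]

lemma filter_sum_eq {N : ℕ} (p : Fin N → ℝ) (k : Fin N) :
    ∑ i ∈ Finset.univ.filter (· ≤ k), p i = cum p ((k : ℕ) + 1) := by
  have h1 : ∀ a : Fin N, (if a ≤ k then p a else 0)
      = (fun j => if h : j < N then (if j ≤ (k:ℕ) then p ⟨j,h⟩ else 0) else 0) (a : ℕ) := by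
    intro a
    show _ = if h : (a:ℕ) < N then (if (a:ℕ) ≤ (k:ℕ) then p ⟨a, h⟩ else 0) else 0
    rw [dif_pos a.isLt]
    by_cases hak : a ≤ k
    · rw [if_pos hak, if_pos (Fin.le_def.mp hak)]
    · rw [if_neg hak, if_neg (fun h => hak (Fin.le_def.mpr h))]
  have h2 := Fin.sum_univ_eq_sum_range
    (fun j => if h : j < N then (if j ≤ (k:ℕ) then p ⟨j,h⟩ else 0) else 0) N
  rw [Finset.sum_filter, Finset.sum_congr rfl (fun a _ => h1 a), h2, cum]
  rw [← Finset.sum_subset (Finset.range_subset_range.2 (by omega : (k:ℕ)+1 ≤ N))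
      (by intro i hi hni
          simp only [Finset.mem_range] at hi hni
          rw [dif_pos hi, if_neg (by omega : ¬ i ≤ (k:ℕ))])]
  refine Finset.sum_congr rfl fun i hi => ?_
  simp only [Finset.mem_range] at hi
  have h3 : i < N := by omega
  simp [h3, Nat.lt_succ_iff.mp hi]

lemma clamp_step {c d u v : ℝ} (hcd : c ≤ d) (huv : u ≤ v) :
    max 0 (min d v - max c u) = max c (min d v) - max c (min d u) := by
  simp only [max_def, min_def]
  split_ifs <;> linarith

lemma sum_clamp {c d : ℝ} (Q : ℕ → ℝ) (N : ℕ) (hQ : ∀ b, Q b ≤ Q (b+1))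
    (hcd : c ≤ d) (h0 : Q 0 ≤ c) (hN : d ≤ Q N) :
    ∑ b ∈ Finset.range N, max 0 (min d (Q (b+1)) - max c (Q b)) = d - c := by
  have : ∀ b ∈ Finset.range N, max 0 (min d (Q (b+1)) - max c (Q b))
      = max c (min d (Q (b+1))) - max c (min d (Q b)) :=
    fun b _ => clamp_step hcd (hQ b)
  rw [Finset.sum_congr rfl this, Finset.sum_range_sub (fun t => max c (min d (Q t)))]
  rw [min_eq_left hN, max_eq_right hcd, min_eq_right (h0.trans hcd), max_eq_left h0]

/-- **Strassen's theorem for finite totally ordered sets.** There is a monotone coupling of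
the probability vectors `p` and `q` — a probability mass function on pairs with first
marginal `p`, second marginal `q`, supported on `{(n, m) : n ≥ m}` — if and only if `p`
stochastically dominates `q`. -/
theorem strassen_finite {N : ℕ} (p q : Fin N → ℝ)
    (hp : IsProbVector p) (hq : IsProbVector q) :
    (∃ ρ : Fin N × Fin N → ℝ,
      (∀ z, 0 ≤ ρ z) ∧
      (∀ a, ∑ b, ρ (a, b) = p a) ∧
      (∀ b, ∑ a, ρ (a, b) = q b) ∧
      (∀ a b, ρ (a, b) ≠ 0 → b ≤ a)) ↔
    StochDom p q := by
  obtain ⟨hp0, hp1⟩ := hp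
  obtain ⟨hq0, hq1⟩ := hq
  constructor
  · rintro ⟨ρ, hρ0, hρ1, hρ2, hρs⟩ k
    calc ∑ a ∈ univ.filter (· ≤ k), p a
        = ∑ a ∈ univ.filter (· ≤ k), ∑ b, ρ (a, b) :=
          Finset.sum_congr rfl fun a _ => (hρ1 a).symm
      _ = ∑ a ∈ univ.filter (· ≤ k), ∑ b ∈ univ.filter (· ≤ k), ρ (a, b) := by
          refine Finset.sum_congr rfl fun a ha => ?_
          simp only [Finset.mem_filter] at ha
          symm
          apply Finset.sum_subset (Finset.filter_subset _ _)
          intro b _ hb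
          simp only [Finset.mem_filter, Finset.mem_univ, true_and] at hb
          by_contra hne
          exact hb (le_trans (hρs a b hne) ha.2)
      _ ≤ ∑ b ∈ univ.filter (· ≤ k), ∑ a, ρ (a, b) := by
          rw [Finset.sum_comm]
          exact Finset.sum_le_sum fun b _ =>
            Finset.sum_le_sum_of_subset_of_nonneg (Finset.filter_subset _ _)
              (fun a _ _ => hρ0 (a, b))
      _ = ∑ b ∈ univ.filter (· ≤ k), q b := Finset.sum_congr rfl fun b _ => hρ2 b
  · intro hdom
    have hPmono := cum_mono hp0
    have hQmono := cum_mono hq0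
    have hPN : cum p N = 1 := by rw [cum_N]; exact hp1
    have hQN : cum q N = 1 := by rw [cum_N]; exact hq1
    have hdom' : ∀ m : ℕ, m ≤ N → cum p m ≤ cum q m := by
      intro m hm
      match m with
      | 0 => simp [cum_zero]
      | Nat.succ m =>
        have hmN : m < N := hm
        have := hdom ⟨m, hmN⟩
        rwa [filter_sum_eq, filter_sum_eq] at this
    refine ⟨fun z => max 0 (min (cum p ((z.1:ℕ)+1)) (cum q ((z.2:ℕ)+1))
        - max (cum p (z.1:ℕ)) (cum q (z.2:ℕ))), fun z => le_max_left _ _, ?_, ?_, ?_⟩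
    · intro a
      have h2 := Fin.sum_univ_eq_sum_range
        (fun j => max 0 (min (cum p ((a:ℕ)+1)) (cum q (j+1))
          - max (cum p (a:ℕ)) (cum q j))) N
      show ∑ b : Fin N, _ = p a
      rw [h2, sum_clamp (cum q) N (fun b => hQmono (Nat.le_succ b))
        (hPmono (Nat.le_succ _))
        (by rw [cum_zero]; rw [← cum_zero p]; exact hPmono (Nat.zero_le _))
        (by rw [hQN, ← hPN]; exact hPmono a.isLt), cum_succ]
      ring
    · intro b
      have hcongr : ∀ a : Fin N, max 0 (min (cum p ((a:ℕ)+1)) (cum q ((b:ℕ)+1))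
          - max (cum p (a:ℕ)) (cum q (b:ℕ)))
          = max 0 (min (cum q ((b:ℕ)+1)) (cum p ((a:ℕ)+1))
          - max (cum q (b:ℕ)) (cum p (a:ℕ))) := by
        intro a; rw [min_comm (cum p ((a:ℕ)+1)), max_comm (cum p (a:ℕ))]
      have h2 := Fin.sum_univ_eq_sum_range
        (fun j => max 0 (min (cum q ((b:ℕ)+1)) (cum p (j+1))
          - max (cum q (b:ℕ)) (cum p j))) N
      show ∑ a : Fin N, _ = q b
      rw [Finset.sum_congr rfl (fun a _ => hcongr a), h2,
        sum_clamp (cum p) N (fun a => hPmono (Nat.le_succ a))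
        (hQmono (Nat.le_succ _))
        (by rw [cum_zero]; rw [← cum_zero q]; exact hQmono (Nat.zero_le _))
        (by rw [hPN, ← hQN]; exact hQmono b.isLt), cum_succ]
      ring
    · intro a b hne
      by_contra hba
      apply hne
      have hab : (a:ℕ) + 1 ≤ (b:ℕ) := by
        have := fun h => hba (Fin.le_def.mpr h)
        omega
      have h1 : min (cum p ((a:ℕ)+1)) (cum q ((b:ℕ)+1)) ≤ max (cum p (a:ℕ)) (cum q (b:ℕ)) :=
        calc min (cum p ((a:ℕ)+1)) (cum q ((b:ℕ)+1)) ≤ cum p ((a:ℕ)+1) := min_le_left _ _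
          _ ≤ cum q ((a:ℕ)+1) := hdom' _ a.isLt
          _ ≤ cum q (b:ℕ) := hQmono hab
          _ ≤ max (cum p (a:ℕ)) (cum q (b:ℕ)) := le_max_right _ _
      show max 0 _ = 0
      rw [max_eq_left (sub_nonpos.mpr h1)]
end

section
/- Let A and B be nonempty finite linearly ordered sets and let ρ be a probability measure on A × B whose support is a chain in the product order, i.e. for any (a, b) and (a', b') with ρ(a,b) > 0 and ρ(a',b') > 0, either (a ≤ a' and b ≤ b') or (a' ≤ a and b' ≤ b). Then the number of elements a ∈ A that are split by ρ — i.e. for which there exist distinct b, b' ∈ B with ρ(a,b) > 0 and ρ(a,b') > 0 — is at most |B| - 1. (In particular, the quantile coupling of two random variables with values in finite linearly ordered sets A and B splits at most |B| - 1 elements of A.) -/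
/-- If `ρ` is a probability mass function on `A × B` (with `A`, `B` nonempty finite linearly
ordered sets) whose support is a chain in the product order, then `ρ` splits at most
`|B| - 1` elements of `A`: the set of `a ∈ A` admitting distinct `b, b'` with
`ρ(a,b) > 0 < ρ(a,b')` has at most `|B| - 1` elements. -/
theorem chain_support_splits_card_le {A B : Type*}
    [Fintype A] [Fintype B] [Nonempty A] [Nonempty B]
    [LinearOrder A] [LinearOrder B]
    (ρ : A × B → ℝ) (hnn : ∀ z, 0 ≤ ρ z) (hsum : ∑ z, ρ z = 1)
    (hchain : ∀ a b a' b', 0 < ρ (a, b) → 0 < ρ (a', b') →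
      (a ≤ a' ∧ b ≤ b') ∨ (a' ≤ a ∧ b' ≤ b)) :
    Set.ncard {a : A | ∃ b b', b ≠ b' ∧ 0 < ρ (a, b) ∧ 0 < ρ (a, b')}
      ≤ Fintype.card B - 1 := by
  classical
  set S := {a : A | ∃ b b', b ≠ b' ∧ 0 < ρ (a, b) ∧ 0 < ρ (a, b')} with hS
  have hBne : (Finset.univ : Finset B).Nonempty := Finset.univ_nonempty
  set top := (Finset.univ : Finset B).max' hBne with htop
  set F : A → Finset B := fun a => Finset.univ.filter (fun b => 0 < ρ (a, b)) with hF
  have hmemF : ∀ a b, b ∈ F a ↔ 0 < ρ (a, b) := by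
    intro a b; simp [hF]
  have key : ∀ a ∈ S, (F a).Nonempty := by
    rintro a ⟨b, b', hne, hb, hb'⟩
    exact ⟨b, (hmemF a b).2 hb⟩
  set f : A → B := fun a =>
    if h : (F a).Nonempty then (F a).min' h else Classical.arbitrary B with hf
  have hfeq : ∀ a (h : (F a).Nonempty), f a = (F a).min' h := by
    intro a h; simp [hf, h]
  -- the min is strictly below the max for split elements
  have hlt : ∀ a (ha : a ∈ S), f a < (F a).max' (key a ha) := by
    rintro a ha
    obtain ⟨b, b', hne, hb, hb'⟩ := ha
    have hbm : b ∈ F a := (hmemF a b).2 hb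
    have hbm' : b' ∈ F a := (hmemF a b').2 hb'
    have e : f a = (F a).min' ⟨b, hbm⟩ := hfeq a ⟨b, hbm⟩
    rw [e]
    exact (F a).min'_lt_max' hbm hbm' hne
  -- mass at max
  have hmax : ∀ a (ha : a ∈ S), 0 < ρ (a, (F a).max' (key a ha)) := fun a ha =>
    (hmemF a _).1 (Finset.max'_mem _ _)
  have hmin : ∀ a (ha : a ∈ S), 0 < ρ (a, f a) := by
    intro a ha
    rw [hfeq a (key a ha)]
    exact (hmemF a _).1 (Finset.min'_mem _ _)
  -- monotonicity lemma
  have hmono : ∀ a ∈ S, ∀ a' ∈ S, a < a' → f a < f a' := by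
    intro a ha a' ha' haa
    have h1 := hmax a ha
    have h2 := hmin a' ha'
    rcases hchain a _ a' _ h1 h2 with ⟨_, hle⟩ | ⟨hle, _⟩
    · exact lt_of_lt_of_le (hlt a ha) hle
    · exact absurd haa (not_lt.2 hle)
  have hinj : Set.InjOn f S := by
    intro a ha a' ha' hfe
    rcases lt_trichotomy a a' with h | h | h
    · exact absurd hfe (ne_of_lt (hmono a ha a' ha' h))
    · exact h
    · exact absurd hfe.symm (ne_of_lt (hmono a' ha' a ha h))
  have himg : f '' S ⊆ {top}ᶜ := by
    rintro _ ⟨a, ha, rfl⟩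
    have : f a < top := lt_of_lt_of_le (hlt a ha) (Finset.le_max' _ _ (Finset.mem_univ _))
    simpa using this.ne
  calc S.ncard = (f '' S).ncard := (Set.ncard_image_of_injOn hinj).symm
    _ ≤ ({top}ᶜ : Set B).ncard := Set.ncard_le_ncard himg (Set.toFinite _)
    _ = Fintype.card B - 1 := by
        rw [Set.ncard_eq_toFinset_card']
        simp [Finset.card_compl]
end

section
/- (Keane–Smorodinsky) Let A and B be finite sets and let ρ be a probability measure on A × B. Then there exists a probability measure ρ' on A × B such that: (i) ρ' has the same first marginal and the same second marginal as ρ; (ii) ρ' is absolutely continuous with respect to ρ, i.e. ρ({(a,b)}) = 0 implies ρ'({(a,b)}) = 0; and (iii) ρ' splits at most |B| - 1 elements of A, i.e. the set of a ∈ A for which there exist distinct b, b' ∈ B with ρ'({(a,b)}) > 0 and ρ'({(a,b')}) > 0 has cardinality at most |B| - 1. -/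
open Finset

/-- **Keane–Smorodinsky.** For any probability mass function `ρ` on a product `A × B` of
finite sets, there is a probability mass function `ρ'` with the same marginals as `ρ`, which
is absolutely continuous with respect to `ρ`, and which splits at most `|B| - 1` elements
of `A`. -/
theorem keane_smorodinsky_marriage {A B : Type*} [Fintype A] [Fintype B]
    (ρ : A × B → ℝ) (hnn : ∀ z, 0 ≤ ρ z) (hsum : ∑ z, ρ z = 1) :
    ∃ ρ' : A × B → ℝ,
      (∀ z, 0 ≤ ρ' z) ∧
      (∀ a, ∑ b, ρ' (a, b) = ∑ b, ρ (a, b)) ∧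
      (∀ b, ∑ a, ρ' (a, b) = ∑ a, ρ (a, b)) ∧
      (∀ a b, ρ (a, b) = 0 → ρ' (a, b) = 0) ∧
      Set.ncard {a : A | ∃ b b', b ≠ b' ∧ 0 < ρ' (a, b) ∧ 0 < ρ' (a, b')}
        ≤ Fintype.card B - 1 := by
  classical
  -- B is nonempty
  have hABne : Nonempty (A × B) := by
    by_contra h
    rw [not_nonempty_iff] at h
    rw [Finset.sum_of_isEmpty] at hsum
    norm_num at hsum
  have hBne : Nonempty B := ⟨(Classical.arbitrary (A × B)).2⟩
  have hBcard : 1 ≤ Fintype.card B := Fintype.card_pos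
  -- The feasibility predicate
  set P : (A × B → ℝ) → Prop := fun μ =>
    (∀ z, 0 ≤ μ z) ∧
    (∀ a, ∑ b, μ (a, b) = ∑ b, ρ (a, b)) ∧
    (∀ b, ∑ a, μ (a, b) = ∑ a, ρ (a, b)) ∧
    (∀ a b, ρ (a, b) = 0 → μ (a, b) = 0) with hPdef
  have hPρ : P ρ := ⟨hnn, fun _ => rfl, fun _ => rfl, fun _ _ h => h⟩
  -- support cardinality
  set supc : (A × B → ℝ) → ℕ := fun μ => (univ.filter fun z => μ z ≠ 0).card with hsupc
  -- pick a feasible μ with minimal support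
  have hex : ∃ n, ∃ μ, P μ ∧ supc μ = n := ⟨_, ρ, hPρ, rfl⟩
  obtain ⟨μ, hPμ, hμcard⟩ := Nat.find_spec hex
  have hmin : ∀ ν, P ν → supc μ ≤ supc ν := by
    intro ν hν
    rw [hμcard]
    exact Nat.find_min' hex ⟨ν, hν, rfl⟩
  obtain ⟨hμnn, hμrow, hμcol, hμac⟩ := hPμ
  refine ⟨μ, hμnn, hμrow, hμcol, hμac, ?_⟩
  -- the split set
  set S : Finset A := univ.filter
    (fun a => ∃ b b', b ≠ b' ∧ 0 < μ (a, b) ∧ 0 < μ (a, b')) with hSdef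
  have hsetS : {a : A | ∃ b b', b ≠ b' ∧ 0 < μ (a, b) ∧ 0 < μ (a, b')} = ↑S := by
    ext a; simp [hSdef]
  rw [hsetS, Set.ncard_coe_finset]
  -- suppose for contradiction that |S| ≥ |B|
  by_contra hcon
  have hSB : Fintype.card B ≤ S.card := by omega
  -- choose two split columns for each a ∈ S
  have hchoice : ∀ a : A, ∃ q : B × B,
      a ∈ S → q.1 ≠ q.2 ∧ 0 < μ (a, q.1) ∧ 0 < μ (a, q.2) := by
    intro a
    by_cases h : a ∈ S
    · obtain ⟨b, b', hb⟩ := (Finset.mem_filter.mp h).2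
      exact ⟨(b, b'), fun _ => hb⟩
    · exact ⟨(Classical.arbitrary B, Classical.arbitrary B), fun h' => absurd h' h⟩
  choose q hq using hchoice
  set f : A → B := fun a => (q a).1 with hfdef
  set g : A → B := fun a => (q a).2 with hgdef
  -- the perturbation direction vectors
  set e : A → B → ℝ := fun a b =>
    (if b = f a then (1:ℝ) else 0) - (if b = g a then (1:ℝ) else 0) with hedef
  have he_rowsum : ∀ a, ∑ b, e a b = 0 := by
    intro a
    simp [hedef, Finset.sum_sub_distrib, Finset.sum_ite_eq']
  -- the family of vectors: all-ones plus the e a, a ∈ S; too many to be independent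
  set w : Option {a // a ∈ S} → (B → ℝ) := fun i =>
    Option.elim i (fun _ => (1:ℝ)) (fun a => e a.1) with hwdef
  have hnotind : ¬ LinearIndependent ℝ w := by
    intro hind
    have hle := hind.fintype_card_le_finrank
    rw [Module.finrank_pi] at hle
    simp only [Fintype.card_option, Fintype.card_coe] at hle
    omega
  rw [Fintype.not_linearIndependent_iff] at hnotind
  obtain ⟨c, hc0, i₀, hi₀⟩ := hnotind
  -- evaluate coordinatewise
  have hc0' : ∀ b, ∑ i, c i * w i b = 0 := by
    intro b
    have := congrFun hc0 b
    simpa using this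
  -- c none = 0
  have hcnone : c none = 0 := by
    have h1 : ∑ b, ∑ i, c i * w i b = 0 := by
      simp [hc0']
    rw [Finset.sum_comm] at h1
    have h2 : ∀ i : Option {a // a ∈ S}, ∑ b, c i * w i b
        = c i * ∑ b, w i b := by
      intro i; rw [Finset.mul_sum]
    simp only [h2] at h1
    have h3 : ∀ i : Option {a // a ∈ S}, c i * ∑ b, w i b
        = Option.elim i (c none * Fintype.card B) (fun _ => 0) := by
      intro i
      match i with
      | none => simp [hwdef]
      | some a => simp [hwdef, he_rowsum a.1]
    simp only [h3] at h1
    rw [Fintype.sum_option] at h1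
    have h4 : c none * (Fintype.card B : ℝ) = 0 := by simpa using h1
    have h5 : (Fintype.card B : ℝ) ≠ 0 := by positivity
    exact (mul_eq_zero.mp h4).resolve_right h5
  obtain ⟨a₀, ha₀⟩ : ∃ a : {a // a ∈ S}, c (some a) ≠ 0 := by
    match i₀ with
    | none => exact absurd hcnone hi₀
    | some a => exact ⟨a, hi₀⟩
  -- coefficient function on A
  set d : A → ℝ := fun a => if h : a ∈ S then c (some ⟨a, h⟩) else 0 with hddef
  have hd_zero : ∀ a ∉ S, d a = 0 := by intro a h; simp [hddef, h]
  have hd_mem : ∀ (a : A) (h : a ∈ S), d a = c (some ⟨a, h⟩) := by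
    intro a h; simp [hddef, h]
  -- column sums of the perturbation vanish
  have hcolzero : ∀ b, ∑ a, d a * e a b = 0 := by
    intro b
    have h1 : ∑ a, d a * e a b = ∑ a ∈ S, d a * e a b := by
      rw [← Finset.sum_subset (Finset.subset_univ S)]
      intro x _ hx
      rw [hd_zero x hx, zero_mul]
    have h2 : ∑ a ∈ S, d a * e a b = ∑ a : {a // a ∈ S}, c (some a) * e a.1 b := by
      rw [← Finset.sum_coe_sort S (fun a => d a * e a b)]
      refine Finset.sum_congr rfl ?_
      intro x _
      rw [hd_mem x.1 x.2]
    have h3 := hc0' b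
    rw [Fintype.sum_option] at h3
    rw [hcnone] at h3
    simp only [hwdef, Option.elim] at h3
    rw [h1, h2]
    simpa using h3
  -- the set of active indices
  set S' : Finset A := S.filter (fun a => d a ≠ 0) with hS'def
  have ha₀S' : (a₀ : A) ∈ S' := by
    rw [hS'def, Finset.mem_filter]
    refine ⟨a₀.2, ?_⟩
    rw [hd_mem a₀.1 a₀.2]
    simpa using ha₀
  -- key positivity facts
  have hfg : ∀ a ∈ S, f a ≠ g a := fun a h => (hq a h).1
  have hμf : ∀ a ∈ S, 0 < μ (a, f a) := fun a h => (hq a h).2.1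
  have hμg : ∀ a ∈ S, 0 < μ (a, g a) := fun a h => (hq a h).2.2
  -- step sizes
  set τ : A → ℝ := fun a => if 0 < d a then μ (a, g a) / d a else μ (a, f a) / (-d a)
    with hτdef
  have hτpos : ∀ a ∈ S', 0 < τ a := by
    intro a ha
    rw [hS'def, Finset.mem_filter] at ha
    obtain ⟨haS, had⟩ := ha
    simp only [hτdef]
    by_cases h : 0 < d a
    · rw [if_pos h]; exact div_pos (hμg a haS) h
    · rw [if_neg h]
      have : d a < 0 := lt_of_le_of_ne (not_lt.mp h) had
      exact div_pos (hμf a haS) (by linarith)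
  obtain ⟨a₁, ha₁S', ha₁min⟩ := S'.exists_min_image τ ⟨a₀, ha₀S'⟩
  set t : ℝ := τ a₁ with htdef
  have htpos : 0 < t := hτpos a₁ ha₁S'
  have ha₁S : a₁ ∈ S := (Finset.mem_filter.mp ha₁S').1
  have ha₁d : d a₁ ≠ 0 := (Finset.mem_filter.mp ha₁S').2
  -- the perturbed measure
  set ν : A × B → ℝ := fun z => μ z + t * d z.1 * e z.1 z.2 with hνdef
  -- basic evaluation of e
  have he_f : ∀ a ∈ S, e a (f a) = 1 := by
    intro a ha
    simp only [hedef]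
    rw [if_neg (hfg a ha)]
    simp
  have he_g : ∀ a ∈ S, e a (g a) = -1 := by
    intro a ha
    simp only [hedef]
    rw [if_neg (Ne.symm (hfg a ha))]
    simp
  have he_other : ∀ a b, b ≠ f a → b ≠ g a → e a b = 0 := by
    intro a b h1 h2
    simp [hedef, h1, h2]
  -- bounds: t ≤ τ a for active a
  have htle : ∀ a ∈ S', t ≤ τ a := ha₁min
  -- nonnegativity of ν
  have hνnn : ∀ z, 0 ≤ ν z := by
    rintro ⟨a, b⟩
    show 0 ≤ μ (a, b) + t * d a * e a b
    by_cases hd : d a = 0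
    · simp [hd]; exact hμnn (a, b)
    · have haS : a ∈ S := by
        by_contra h
        exact hd (hd_zero a h)
      have haS' : a ∈ S' := Finset.mem_filter.mpr ⟨haS, hd⟩
      by_cases hbf : b = f a
      · subst hbf
        rw [he_f a haS, mul_one]
        by_cases hds : 0 < d a
        · have := (hμf a haS).le
          nlinarith
        · have hdneg : d a < 0 := lt_of_le_of_ne (not_lt.mp hds) hd
          have hτa : τ a = μ (a, f a) / (-d a) := by
            simp only [hτdef]; rw [if_neg hds]
          have h1 : t ≤ μ (a, f a) / (-d a) := hτa ▸ htle a haS'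
          have h2 : t * (-d a) ≤ μ (a, f a) := by
            rw [← le_div_iff₀ (by linarith : (0:ℝ) < -d a)]
            exact h1
          nlinarith
      · by_cases hbg : b = g a
        · subst hbg
          rw [he_g a haS]
          by_cases hds : 0 < d a
          · have hτa : τ a = μ (a, g a) / d a := by
              simp only [hτdef]; rw [if_pos hds]
            have h1 : t ≤ μ (a, g a) / d a := hτa ▸ htle a haS'
            have h2 : t * d a ≤ μ (a, g a) := by
              rw [← le_div_iff₀ hds]
              exact h1
            nlinarith
          · have hdneg : d a < 0 := lt_of_le_of_ne (not_lt.mp hds) hd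
            have := (hμg a haS).le
            nlinarith
        · rw [he_other a b hbf hbg, mul_zero, add_zero]
          exact hμnn (a, b)
  -- support of ν is contained in support of μ
  have hνsupp : ∀ z, μ z = 0 → ν z = 0 := by
    rintro ⟨a, b⟩ h0
    show μ (a, b) + t * d a * e a b = 0
    by_cases hd : d a = 0
    · simp [hd, h0]
    · have haS : a ∈ S := by
        by_contra h
        exact hd (hd_zero a h)
      by_cases hbf : b = f a
      · exact absurd h0 (by subst hbf; exact (hμf a haS).ne')
      · by_cases hbg : b = g a
        · exact absurd h0 (by subst hbg; exact (hμg a haS).ne')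
        · rw [he_other a b hbf hbg]
          simp [h0]
  -- ν is feasible
  have hPν : P ν := by
    refine ⟨hνnn, ?_, ?_, ?_⟩
    · intro a
      have hev : ∀ b, ν (a, b) = μ (a, b) + t * d a * e a b := fun b => rfl
      simp only [hev]
      rw [Finset.sum_add_distrib]
      have : ∑ b, t * d a * e a b = t * d a * ∑ b, e a b := by
        rw [Finset.mul_sum]
      rw [this, he_rowsum a, mul_zero, add_zero]
      exact hμrow a
    · intro b
      have hev : ∀ a, ν (a, b) = μ (a, b) + t * d a * e a b := fun a => rfl
      simp only [hev]
      rw [Finset.sum_add_distrib]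
      have h1 : ∑ a, t * d a * e a b = t * ∑ a, d a * e a b := by
        rw [Finset.mul_sum]
        refine Finset.sum_congr rfl ?_
        intro a _
        ring
      rw [h1, hcolzero b, mul_zero, add_zero]
      exact hμcol b
    · intro a b h0
      exact hνsupp (a, b) (hμac a b h0)
  -- but ν has strictly smaller support: the cell z₁ dies
  set z₁ : A × B := if 0 < d a₁ then (a₁, g a₁) else (a₁, f a₁) with hz₁def
  have hz₁pos : 0 < μ z₁ := by
    simp only [hz₁def]
    by_cases h : 0 < d a₁
    · rw [if_pos h]; exact hμg a₁ ha₁S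
    · rw [if_neg h]; exact hμf a₁ ha₁S
  have hz₁zero : ν z₁ = 0 := by
    simp only [hz₁def]
    by_cases h : 0 < d a₁
    · rw [if_pos h]
      show μ (a₁, g a₁) + t * d a₁ * e a₁ (g a₁) = 0
      rw [he_g a₁ ha₁S]
      have ht : t = μ (a₁, g a₁) / d a₁ := by
        rw [htdef]; simp only [hτdef]; rw [if_pos h]
      have hcancel : μ (a₁, g a₁) / d a₁ * d a₁ = μ (a₁, g a₁) :=
        div_mul_cancel₀ _ ha₁d
      rw [ht]
      linarith
    · rw [if_neg h]
      show μ (a₁, f a₁) + t * d a₁ * e a₁ (f a₁) = 0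
      rw [he_f a₁ ha₁S, mul_one]
      have ht : t = μ (a₁, f a₁) / (-d a₁) := by
        rw [htdef]; simp only [hτdef]; rw [if_neg h]
      have hne : (-d a₁) ≠ 0 := neg_ne_zero.mpr ha₁d
      have hcancel : μ (a₁, f a₁) / (-d a₁) * (-d a₁) = μ (a₁, f a₁) :=
        div_mul_cancel₀ _ hne
      rw [ht]
      linarith
  have hssub : (univ.filter fun z => ν z ≠ 0) ⊂ (univ.filter fun z => μ z ≠ 0) := by
    constructor
    · intro z hz
      rw [Finset.mem_filter] at hz ⊢
      refine ⟨Finset.mem_univ z, ?_⟩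
      intro h0
      exact hz.2 (hνsupp z h0)
    · intro hsub
      have hz₁mem : z₁ ∈ univ.filter fun z => μ z ≠ 0 := by
        rw [Finset.mem_filter]; exact ⟨Finset.mem_univ z₁, hz₁pos.ne'⟩
      have := hsub hz₁mem
      rw [Finset.mem_filter] at this
      exact this.2 hz₁zero
  have hlt : supc ν < supc μ := Finset.card_lt_card hssub
  have := hmin ν hPν
  omega
end
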